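/- arXiv:1011.0212 — 8 statements merged into one kernel-verified Lean document; each statement's English description precedes it below -/
import Mathlib

section
/- Let μ be a quasi-translation invariant Radon measure on ℝ, let g be a bounded Borel function with bounded support, and let (t_n) be a sequence converging to 0. Then the functions x ↦ g(x − t_n) converge to g in μ-measure. -/
open MeasureTheory Filter
open scoped ENNReal

lemma qti_absolutelyContinuous (μ : Measure ℝ) [IsFiniteMeasureOnCompacts μ]
    (hqti : ∀ E : Set ℝ, MeasurableSet E → ∀ t : ℝ, (μ E = 0 ↔ μ ((· - t) ⁻¹' E) = 0)) :
    μ ≪ (volume : Measure ℝ) := by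
  refine Measure.AbsolutelyContinuous.mk (fun E hE hvE => ?_)
  set A : Set (ℝ × ℝ) := {p | p.2 - p.1 ∈ E} with hAdef
  have hA : MeasurableSet A := (measurable_snd.sub measurable_fst) hE
  have h0 : (volume.prod μ) A = 0 := by
    rw [Measure.prod_apply_symm hA]
    have hy : ∀ y : ℝ, (volume : Measure ℝ) ((fun x => (x, y)) ⁻¹' A) = 0 := by
      intro y
      have h1 : ((fun x => (x, y)) ⁻¹' A) = (fun s => y - s) ⁻¹' E := rfl
      rw [h1, (Measure.measurePreserving_sub_left (volume : Measure ℝ) y).measure_preimage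
        hE.nullMeasurableSet]
      exact hvE
    simp [hy]
  rw [Measure.prod_apply hA] at h0
  rw [lintegral_eq_zero_iff (measurable_measure_prodMk_left (ν := μ) hA)] at h0
  obtain ⟨s, hs⟩ := h0.exists
  exact (hqti E hE s).mpr hs

set_option maxHeartbeats 1000000 in
/-- For a q.t.i. Radon measure, a bounded Borel function with bounded support, and t_n → 0,
the translates x ↦ g(x - t_n) converge to g in μ-measure. -/
theorem stmt3 (μ : Measure ℝ) [IsFiniteMeasureOnCompacts μ]
    (hqti : ∀ E : Set ℝ, MeasurableSet E → ∀ t : ℝ, (μ E = 0 ↔ μ ((· - t) ⁻¹' E) = 0))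
    (g : ℝ → ℝ) (hg : Measurable g) (hgb : ∃ M : ℝ, ∀ x, |g x| ≤ M)
    (hsupp : Bornology.IsBounded (Function.support g))
    (t : ℕ → ℝ) (ht : Tendsto t atTop (nhds 0)) :
    TendstoInMeasure μ (fun n x => g (x - t n)) atTop g := by
  obtain ⟨M, hM⟩ := hgb
  obtain ⟨r, hr⟩ := hsupp.subset_closedBall 0
  obtain ⟨C, hC⟩ := (Metric.isBounded_range_of_tendsto t ht).subset_closedBall 0
  -- integrability of g w.r.t. Lebesgue
  have hgi : Integrable g volume := by
    have hind : Integrable ((Metric.closedBall (0:ℝ) r).indicator fun _ => M) volume := by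
      rw [integrable_indicator_iff measurableSet_closedBall]
      exact integrableOn_const measure_closedBall_lt_top.ne
    refine hind.mono' hg.aestronglyMeasurable (Eventually.of_forall fun x => ?_)
    by_cases hx : x ∈ Metric.closedBall (0:ℝ) r
    · simpa [Set.indicator_of_mem hx, Real.norm_eq_abs] using hM x
    · have hgx : g x = 0 := by
        by_contra h
        exact hx (hr (Function.mem_support.mpr h))
      simp [Set.indicator_of_notMem hx, hgx]
  -- convergence in Lebesgue measure via L¹ continuity of translation
  haveI : Fact ((1:ℝ≥0∞) ≤ 1) := ⟨le_rfl⟩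
  set G : Lp ℝ 1 (volume : Measure ℝ) := (memLp_one_iff_integrable.mpr hgi).toLp g with hGdef
  let φ : ℝ → {f : C(ℝ, ℝ) // MeasurePreserving f (volume : Measure ℝ) volume} :=
    fun s => ⟨⟨fun x => x - s, by continuity⟩, measurePreserving_sub_right volume s⟩
  have hφcont : Continuous φ := by
    refine Continuous.subtype_mk ?_ _
    exact ContinuousMap.continuous_of_continuous_uncurry _ (continuous_snd.sub continuous_fst)
  have hcont := Lp.compMeasurePreserving_continuous (volume : Measure ℝ) (volume : Measure ℝ)
    ℝ (p := 1) (by norm_num)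
  have hpair : Tendsto (fun n => ((G, φ (t n)) :
      Lp ℝ 1 (volume : Measure ℝ) × {f : C(ℝ, ℝ) // MeasurePreserving f volume volume}))
      atTop (nhds (G, φ 0)) :=
    tendsto_const_nhds.prodMk_nhds ((hφcont.tendsto 0).comp ht)
  have hLp : Tendsto (fun n => Lp.compMeasurePreserving (φ (t n)).1 (φ (t n)).2 G) atTop
      (nhds (Lp.compMeasurePreserving (φ 0).1 (φ 0).2 G)) :=
    (hcont.tendsto _).comp hpair
  rw [Lp.tendsto_Lp_iff_tendsto_eLpNorm'] at hLp
  have hvol0 : TendstoInMeasure volume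
      (fun n => ⇑(Lp.compMeasurePreserving (φ (t n)).1 (φ (t n)).2 G)) atTop
      ⇑(Lp.compMeasurePreserving (φ 0).1 (φ 0).2 G) :=
    tendstoInMeasure_of_tendsto_eLpNorm one_ne_zero
      (fun n => Lp.aestronglyMeasurable _) (Lp.aestronglyMeasurable _) hLp
  have hGae : ⇑G =ᵐ[volume] g := (memLp_one_iff_integrable.mpr hgi).coeFn_toLp
  have hcoe : ∀ s : ℝ, ⇑(Lp.compMeasurePreserving (φ s).1 (φ s).2 G) =ᵐ[volume]
      fun x => g (x - s) := by
    intro s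
    refine (Lp.coeFn_compMeasurePreserving G (φ s).2).trans ?_
    have := (φ s).2.quasiMeasurePreserving.ae_eq_comp hGae.symm
    exact this.symm
  have hvol : TendstoInMeasure volume (fun n x => g (x - t n)) atTop g := by
    refine hvol0.congr (fun n => hcoe (t n)) ?_
    refine (hcoe 0).trans (Eventually.of_forall fun x => ?_)
    simp
  -- absolute continuity and transfer to μ
  have hac : μ ≪ (volume : Measure ℝ) := qti_absolutelyContinuous μ hqti
  set B : Set ℝ := Metric.closedBall 0 (r + C) with hBdef
  set ν : Measure ℝ := μ.restrict B with hνdef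
  haveI : IsFiniteMeasure ν := by
    constructor
    rw [hνdef, Measure.restrict_apply_univ]
    exact (isCompact_closedBall 0 (r + C)).measure_lt_top
  have hacν : ν ≪ (volume : Measure ℝ) :=
    (Measure.absolutelyContinuous_of_le Measure.restrict_le_self).trans hac
  have hC0 : 0 ≤ C := le_trans (abs_nonneg _) (by simpa [Real.dist_eq] using hC ⟨0, rfl⟩)
  have hBmem : ∀ x : ℝ, |x| ≤ r + C → x ∈ B := by
    intro x hx
    rw [hBdef]
    simpa [Real.dist_eq] using hx
  have hgzero : ∀ x : ℝ, x ∉ B → g x = 0 := by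
    intro x hx
    by_contra h
    have hxr : |x| ≤ r := by
      simpa [Real.dist_eq] using hr (Function.mem_support.mpr h)
    exact hx (hBmem x (by linarith))
  have hsubset : ∀ n : ℕ, ∀ ε : ℝ, 0 < ε →
      {x : ℝ | ε ≤ dist (g (x - t n)) (g x)} ⊆ B := by
    intro n ε hε x hx
    by_contra hxB
    have h1 : g x = 0 := hgzero x hxB
    have h2 : g (x - t n) = 0 := by
      by_contra h
      have hxtr : |x - t n| ≤ r := by
        simpa [Real.dist_eq] using hr (Function.mem_support.mpr h)
      have htn : |t n| ≤ C := by simpa [Real.dist_eq] using hC ⟨n, rfl⟩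
      have hxb : |x| ≤ |x - t n| + |t n| := by
        calc |x| = |(x - t n) + t n| := by ring_nf
        _ ≤ |x - t n| + |t n| := abs_add_le _ _
      exact hxB (hBmem x (by linarith))
    simp only [Set.mem_setOf_eq, h1, h2, dist_self] at hx
    linarith
  intro ε hε
  have hmeasS : ∀ k : ℕ, MeasurableSet {x : ℝ | ε ≤ edist (g (x - t k)) (g x)} := by
    intro k
    exact measurableSet_le measurable_const
      (((hg.comp (measurable_id.sub_const (t k))).edist hg))
  refine tendsto_of_subseq_tendsto fun ns hns => ?_
  have h1 : TendstoInMeasure volume (fun i x => g (x - t (ns i))) atTop g :=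
    fun ε' hε' => (hvol ε' hε').comp hns
  obtain ⟨ms, _, hae⟩ := h1.exists_seq_tendsto_ae
  have haeν : ∀ᵐ x ∂ν, Tendsto (fun i => g (x - t (ns (ms i)))) atTop (nhds (g x)) :=
    hae.filter_mono hacν.ae_le
  have htimν : TendstoInMeasure ν (fun i x => g (x - t (ns (ms i)))) atTop g :=
    tendstoInMeasure_of_tendsto_ae
      (fun i => (hg.comp (measurable_id.sub_const _)).aestronglyMeasurable) haeν
  refine ⟨ms, ?_⟩
  have hν := htimν ε hε
  refine Tendsto.congr (fun i => ?_) hν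
  have hsub : {x : ℝ | ε ≤ edist (g (x - t (ns (ms i)))) (g x)} ⊆ B := by
    intro x hx
    by_contra hxB
    have hd : dist (g (x - t (ns (ms i)))) (g x) = 0 := by
      by_contra hne
      have hpos : 0 < dist (g (x - t (ns (ms i)))) (g x) := lt_of_le_of_ne dist_nonneg (Ne.symm hne)
      exact hxB (hsubset (ns (ms i)) _ hpos (a := x) (le_refl (dist (g (x - t (ns (ms i)))) (g x))))
    simp only [Set.mem_setOf_eq] at hx
    rw [edist_dist, hd, ENNReal.ofReal_zero] at hx
    exact absurd hx (not_le.mpr hε)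
  rw [hνdef, Measure.restrict_apply (hmeasS _),
    Set.inter_eq_left.mpr hsub]
end

section
/- Fix 1 ≤ p < ∞. Let μ be a Radon measure on ℝ such that each translation T_t (f ↦ f(· − t)) maps L^p(μ) into itself as a well-defined linear operator (in particular μ is quasi-translation invariant). Then for every compact interval N = [a,b] there is a constant C > 0 such that μ(E + t) ≤ C·μ(E) for all t ∈ N and all Borel sets E with μ(E) < ∞. -/
open MeasureTheory ENNReal
open Metric Set Filter Topology Pointwise


lemma keyA (μ : Measure ℝ) [IsFiniteMeasureOnCompacts μ] (t : ℝ)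
    (hac : ∀ E : Set ℝ, MeasurableSet E → μ E = 0 → μ ((· - t) ⁻¹' E) = 0)
    (E : Set ℝ) (hE : MeasurableSet E) :
    μ ((· - t) ⁻¹' E) ≤
      (⨆ q : ℚ × ℚ, μ ((· - t) ⁻¹' closedBall (q.1 : ℝ) (q.2 : ℝ)) /
        μ (closedBall (q.1 : ℝ) (q.2 : ℝ))) * μ E := by
  set c := ⨆ q : ℚ × ℚ, μ ((· - t) ⁻¹' closedBall (q.1 : ℝ) (q.2 : ℝ)) /
        μ (closedBall (q.1 : ℝ) (q.2 : ℝ)) with hc_def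
  have hm : Measurable fun x : ℝ => x - t := measurable_id.sub_const t
  set ν := μ.map (· - t) with hν_def
  have hν : ∀ s : Set ℝ, MeasurableSet s → ν s = μ ((· - t) ⁻¹' s) := fun s hs =>
    Measure.map_apply hm hs
  have hνlt : ∀ s : Set ℝ, Bornology.IsBounded s → ν s ≠ ∞ := by
    intro s hs
    have h1 : ν s ≤ ν (closure s) := measure_mono subset_closure
    have h2 : ν (closure s) = μ ((· - t) ⁻¹' closure s) := hν _ isClosed_closure.measurableSet
    have h3 : (· - t) ⁻¹' closure s = (· + t) '' closure s := by
      ext x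
      simp only [Set.mem_preimage, Set.mem_image]
      constructor
      · intro h; exact ⟨x - t, h, by ring⟩
      · rintro ⟨y, hy, rfl⟩; simpa using hy
    have h4 : IsCompact ((· + t) '' closure s) :=
      (hs.isCompact_closure).image (continuous_add_right t)
    have h5 := h4.measure_lt_top (μ := μ)
    rw [h3] at h2
    exact ((h1.trans_eq h2).trans_lt h5).ne
  have hνcb : ∀ x r : ℝ, ν (closedBall x r) ≠ ∞ := fun x r => hνlt _ isBounded_closedBall
  have hacν : ν ≪ μ := Measure.AbsolutelyContinuous.mk fun s hs h => by
    rw [hν s hs]; exact hac s hs h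
  have hballs : ∀ q : ℚ × ℚ,
      ν (closedBall (q.1 : ℝ) (q.2 : ℝ)) ≤ c * μ (closedBall (q.1 : ℝ) (q.2 : ℝ)) := by
    intro q
    rcases eq_or_ne (μ (closedBall (q.1 : ℝ) (q.2 : ℝ))) 0 with h0 | h0
    · rw [hν _ measurableSet_closedBall]
      simp [hac _ measurableSet_closedBall h0]
    · have hfin : μ (closedBall (q.1 : ℝ) (q.2 : ℝ)) ≠ ∞ := measure_closedBall_lt_top.ne
      have hle : ν (closedBall (q.1 : ℝ) (q.2 : ℝ)) / μ (closedBall (q.1 : ℝ) (q.2 : ℝ)) ≤ c := by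
        rw [hν _ measurableSet_closedBall]
        exact le_iSup (fun q : ℚ × ℚ => μ ((· - t) ⁻¹' closedBall (q.1 : ℝ) (q.2 : ℝ)) /
          μ (closedBall (q.1 : ℝ) (q.2 : ℝ))) q
      rwa [ENNReal.div_le_iff h0 hfin] at hle
  have hreal : ∀ x r : ℝ, ν (closedBall x r) ≤ c * μ (closedBall x r) := by
    intro x r
    rcases lt_or_ge r 0 with hr | hr
    · simp [Metric.closedBall_eq_empty.2 hr]
    rcases eq_top_or_lt_top c with hc | hc
    · rcases eq_or_ne (μ (closedBall x r)) 0 with h0 | h0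
      · rw [hν _ measurableSet_closedBall]
        simp [hac _ measurableSet_closedBall h0]
      · rw [hc, ENNReal.top_mul h0]; exact le_top
    have key : ∀ k : ℕ, ν (closedBall x r) ≤ c * μ (closedBall x (r + 3 / (k + 1))) := by
      intro k
      have hk : (0:ℝ) < 1 / (k + 1) := by positivity
      obtain ⟨q, hq⟩ := exists_rat_near x hk
      obtain ⟨s, hs1, hs2⟩ := exists_rat_btwn
        (show r + 1 / (k + 1) < r + 2 / (k + 1) by
          have hp : (0:ℝ) < (k:ℝ) + 1 := by positivity
          have : (1:ℝ) / (k+1) < 2 / (k+1) := by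
            rw [div_lt_div_iff₀ hp hp]; nlinarith
          linarith)
      have h1 : closedBall x r ⊆ closedBall (q : ℝ) (s : ℝ) := by
        intro y hy
        have hxy : dist y x ≤ r := mem_closedBall.1 hy
        have : dist y (q : ℝ) ≤ dist y x + dist x (q : ℝ) := dist_triangle _ _ _
        have hxq : dist x (q : ℝ) < 1 / (k + 1) := by
          rw [Real.dist_eq]; exact hq
        exact mem_closedBall.2 (by linarith)
      have h2 : closedBall (q : ℝ) (s : ℝ) ⊆ closedBall x (r + 3 / (k + 1)) := by
        intro y hy
        have hyq : dist y (q : ℝ) ≤ (s : ℝ) := mem_closedBall.1 hy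
        have : dist y x ≤ dist y (q : ℝ) + dist (q : ℝ) x := dist_triangle _ _ _
        have hqx : dist (q : ℝ) x < 1 / (k + 1) := by
          rw [dist_comm, Real.dist_eq]; exact hq
        have h2k : (2:ℝ) / (k+1) + 1 / (k+1) ≤ 3 / (k+1) := by
          rw [← add_div, div_le_div_iff₀ (by positivity) (by positivity)]; ring_nf; linarith [sq_nonneg ((k:ℝ)+1)]
        exact mem_closedBall.2 (by nlinarith)
      calc ν (closedBall x r) ≤ ν (closedBall (q : ℝ) (s : ℝ)) := measure_mono h1
        _ ≤ c * μ (closedBall (q : ℝ) (s : ℝ)) := hballs (q, s)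
        _ ≤ c * μ (closedBall x (r + 3 / (k + 1))) := mul_le_mul_right (measure_mono h2) c
    have hcompact : IsCompact (closedBall x r) := isCompact_closedBall x r
    have htt := tendsto_measure_cthickening_of_isCompact (μ := μ) hcompact
    have hseq : Tendsto (fun k : ℕ => (3:ℝ) / (k + 1)) atTop (𝓝 0) := by
      have := tendsto_one_div_add_atTop_nhds_zero_nat (𝕜 := ℝ)
      have h3 : Tendsto (fun k : ℕ => 3 * (1 / ((k:ℝ) + 1))) atTop (𝓝 (3 * 0)) :=
        this.const_mul 3
      simpa [div_eq_mul_inv] using h3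
    have h6 : Tendsto (fun k : ℕ => μ (cthickening (3 / (k + 1)) (closedBall x r))) atTop
        (𝓝 (μ (closedBall x r))) := htt.comp hseq
    have h7 : Tendsto (fun k : ℕ => c * μ (closedBall x (r + 3 / (k + 1)))) atTop
        (𝓝 (c * μ (closedBall x r))) := by
      refine ENNReal.Tendsto.const_mul ?_ (Or.inr hc.ne)
      convert h6 using 2 with k
      rw [cthickening_closedBall (by positivity) hr x]
      congr 1
      ring
    exact ge_of_tendsto h7 (Filter.Eventually.of_forall key)
  haveI : IsFiniteMeasureOnCompacts ν :=
    ⟨fun {K} hK => lt_top_iff_ne_top.2 (hνlt K hK.isBounded)⟩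
  have hrn : ν.rnDeriv μ ≤ᵐ[μ] fun _ => c := by
    filter_upwards [Besicovitch.ae_tendsto_rnDeriv ν μ] with x hx
    refine le_of_tendsto hx ?_
    filter_upwards [self_mem_nhdsWithin] with r hr
    exact ENNReal.div_le_of_le_mul (hreal x r)
  have hwd := Measure.withDensity_rnDeriv_eq ν μ hacν
  calc μ ((· - t) ⁻¹' E) = ν E := (hν E hE).symm
    _ = ∫⁻ x in E, ν.rnDeriv μ x ∂μ := by
        conv_lhs => rw [← hwd]
        rw [withDensity_apply _ hE]
    _ ≤ ∫⁻ _ in E, c ∂μ := lintegral_mono_ae (ae_restrict_of_ae hrn)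
    _ = c * μ E := by rw [setLIntegral_const]


lemma rpow_ne_top' {x : ℝ≥0∞} (hx : x ≠ 0) (hx' : x ≠ ∞) (y : ℝ) : x ^ y ≠ ∞ := by
  rcases le_or_gt 0 y with h | h
  · exact ENNReal.rpow_ne_top_of_nonneg h hx'
  · have h2 : x ^ y = (x ^ (-y))⁻¹ := by rw [← ENNReal.rpow_neg, neg_neg]
    rw [h2, Ne, ENNReal.inv_eq_top]
    exact (ENNReal.rpow_pos (bot_lt_iff_ne_bot.2 hx) hx').ne'

lemma rpow_ne_zero' {x : ℝ≥0∞} (hx : x ≠ 0) (hx' : x ≠ ∞) (y : ℝ) : x ^ y ≠ 0 :=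
  (ENNReal.rpow_pos (bot_lt_iff_ne_bot.2 hx) hx').ne'

lemma keyB (p : ℝ≥0∞) (hp1 : 1 ≤ p) (hp : p ≠ ⊤)
    (μ : Measure ℝ) [IsFiniteMeasureOnCompacts μ] (t : ℝ)
    (hqti : ∀ E : Set ℝ, MeasurableSet E → (μ E = 0 ↔ μ ((· - t) ⁻¹' E) = 0))
    (hmap : ∀ f : ℝ → ℝ, MemLp f p μ → MemLp (fun x => f (x - t)) p μ) :
    (⨆ q : ℚ × ℚ, μ ((· - t) ⁻¹' closedBall (q.1 : ℝ) (q.2 : ℝ)) /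
        μ (closedBall (q.1 : ℝ) (q.2 : ℝ))) ≠ ∞ := by
  set r := p.toReal with hr_def
  have hp0 : p ≠ 0 := (lt_of_lt_of_le zero_lt_one hp1).ne'
  have hr1 : 1 ≤ r := by
    have := ENNReal.toReal_mono hp hp1
    simpa using this
  have hr0 : 0 < r := lt_of_lt_of_le zero_lt_one hr1
  intro htop
  -- selection of bad balls
  have hsel : ∀ n : ℕ, ∃ q : ℚ × ℚ,
      (2 : ℝ≥0∞) ^ (2 * (n : ℝ) * r) < μ ((· - t) ⁻¹' closedBall (q.1 : ℝ) (q.2 : ℝ)) /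
        μ (closedBall (q.1 : ℝ) (q.2 : ℝ)) := by
    intro n
    have hfin : (2 : ℝ≥0∞) ^ (2 * (n : ℝ) * r) < ∞ :=
      ENNReal.rpow_lt_top_of_nonneg (by positivity) (by norm_num)
    rw [← lt_iSup_iff, htop]
    exact hfin
  choose Q hQ using hsel
  set B : ℕ → Set ℝ := fun n => closedBall ((Q n).1 : ℝ) ((Q n).2 : ℝ) with hB_def
  have hBmeas : ∀ n, MeasurableSet (B n) := fun n => measurableSet_closedBall
  have hBfin : ∀ n, μ (B n) ≠ ∞ := fun n => measure_closedBall_lt_top.ne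
  have hB0 : ∀ n, μ (B n) ≠ 0 := by
    intro n h0
    have h1 := (hqti (B n) (hBmeas n)).1 h0
    have h2 := hQ n
    rw [show μ ((· - t) ⁻¹' closedBall ((Q n).1 : ℝ) ((Q n).2 : ℝ)) = 0 from h1,
      ENNReal.zero_div] at h2
    simp at h2
  have hν : ∀ n : ℕ, (2 : ℝ≥0∞) ^ (2 * (n : ℝ) * r) * μ (B n) ≤ μ ((· - t) ⁻¹' B n) := by
    intro n
    calc (2 : ℝ≥0∞) ^ (2 * (n : ℝ) * r) * μ (B n)
        ≤ μ ((· - t) ⁻¹' B n) / μ (B n) * μ (B n) := mul_le_mul_left (hQ n).le _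
      _ = μ ((· - t) ⁻¹' B n) := ENNReal.div_mul_cancel (hB0 n) (hBfin n)
  -- the gliding hump function
  set a : ℕ → ℝ≥0∞ := fun n => (2 : ℝ≥0∞) ^ (-(n : ℝ)) * μ (B n) ^ (-(1 / r)) with ha_def
  have ha_ne_top : ∀ n, a n ≠ ∞ := fun n =>
    ENNReal.mul_ne_top (rpow_ne_top' (by norm_num) (by norm_num) _)
      (rpow_ne_top' (hB0 n) (hBfin n) _)
  set ind : ℕ → ℝ → ℝ≥0∞ := fun n => (B n).indicator (fun _ => a n) with hind_def
  have hind_meas : ∀ n, Measurable (ind n) := fun n =>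
    measurable_const.indicator (hBmeas n)
  have hind_pow : ∀ n x, ind n x ^ r = (B n).indicator (fun _ => a n ^ r) x := by
    intro n x
    by_cases hx : x ∈ B n <;> simp [hind_def, hx, ENNReal.zero_rpow_of_pos hr0]
  have han_r : ∀ n : ℕ, a n ^ r = (2 : ℝ≥0∞) ^ (-(n : ℝ) * r) * (μ (B n))⁻¹ := by
    intro n
    rw [ha_def]
    rw [ENNReal.mul_rpow_of_ne_top (rpow_ne_top' (by norm_num) (by norm_num) _)
      (rpow_ne_top' (hB0 n) (hBfin n) _)]
    rw [← ENNReal.rpow_mul, ← ENNReal.rpow_mul]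
    congr 1
    rw [show -(1 / r) * r = -1 by field_simp]
    exact ENNReal.rpow_neg_one _
  have hint : ∀ n : ℕ, ∫⁻ x, ind n x ^ r ∂μ = (2 : ℝ≥0∞) ^ (-(n : ℝ) * r) := by
    intro n
    simp_rw [hind_pow]
    rw [lintegral_indicator (hBmeas n), setLIntegral_const, han_r, mul_assoc,
      ENNReal.inv_mul_cancel (hB0 n) (hBfin n), mul_one]
  have hint_root : ∀ n : ℕ, (∫⁻ x, ind n x ^ r ∂μ) ^ (1 / r) = (2 : ℝ≥0∞) ^ (-(n : ℝ)) := by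
    intro n
    rw [hint, ← ENNReal.rpow_mul]
    congr 1
    field_simp
  -- partial sums and Minkowski
  set S : ℕ → ℝ → ℝ≥0∞ := fun N x => ∑ n ∈ Finset.range N, ind n x with hS_def
  have hS_meas : ∀ N, Measurable (S N) := fun N =>
    Finset.measurable_sum _ fun n _ => hind_meas n
  have hgeom : ∀ N : ℕ, ∑ n ∈ Finset.range N, (2 : ℝ≥0∞) ^ (-(n : ℝ)) ≤ 2 := by
    intro N
    have h1 : ∀ n : ℕ, (2 : ℝ≥0∞) ^ (-(n : ℝ)) = (2⁻¹ : ℝ≥0∞) ^ n := by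
      intro n
      rw [ENNReal.rpow_neg, ENNReal.rpow_natCast, ENNReal.inv_pow]
    simp_rw [h1]
    refine le_trans (ENNReal.sum_le_tsum _) ?_
    rw [ENNReal.tsum_geometric]
    rw [ENNReal.one_sub_inv_two, inv_inv]
  have hmink : ∀ N : ℕ, (∫⁻ x, S N x ^ r ∂μ) ^ (1 / r) ≤
      ∑ n ∈ Finset.range N, (2 : ℝ≥0∞) ^ (-(n : ℝ)) := by
    intro N
    induction N with
    | zero =>
        have hS0 : ∀ x : ℝ, S 0 x ^ r = 0 := by
          intro x
          have h00 : S 0 x = 0 := by simp [hS_def]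
          rw [h00]
          exact ENNReal.zero_rpow_of_pos hr0
        simp only [hS0, lintegral_zero, Finset.range_zero, Finset.sum_empty]
        rw [ENNReal.zero_rpow_of_pos (one_div_pos.2 hr0)]
    | succ N ih =>
        have hsplit : S (N + 1) = fun x => S N x + ind N x := by
          funext x
          simp [hS_def, Finset.sum_range_succ]
        rw [hsplit, Finset.sum_range_succ]
        refine le_trans (ENNReal.lintegral_Lp_add_le (hS_meas N).aemeasurable
          (hind_meas N).aemeasurable hr1) ?_
        rw [hint_root N]
        exact add_le_add_left ih _
  have hSbound : ∀ N : ℕ, ∫⁻ x, S N x ^ r ∂μ ≤ 2 ^ r := by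
    intro N
    have h1 := le_trans (hmink N) (hgeom N)
    have h2 := ENNReal.rpow_le_rpow h1 hr0.le
    rwa [← ENNReal.rpow_mul, one_div, inv_mul_cancel₀ hr0.ne', ENNReal.rpow_one] at h2
  -- the function g
  set g : ℝ → ℝ≥0∞ := fun x => ∑' n, ind n x with hg_def
  have hg_meas : Measurable g := Measurable.ennreal_tsum hind_meas
  have hmono : ∀ x, Monotone fun N => S N x := fun x N M h =>
    Finset.sum_le_sum_of_subset (Finset.range_subset_range.2 h)
  have hgS : ∀ x, g x = ⨆ N, S N x := fun x => ENNReal.tsum_eq_iSup_nat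
  have hgr : ∀ x, g x ^ r = ⨆ N, S N x ^ r := by
    intro x
    refine le_antisymm ?_ (iSup_le fun N => ENNReal.rpow_le_rpow (by
      rw [hgS]; exact le_iSup (fun N => S N x) N) hr0.le)
    have htd : Tendsto (fun N => S N x) atTop (𝓝 (g x)) := by
      rw [hgS]; exact tendsto_atTop_iSup (hmono x)
    have htd2 : Tendsto (fun N => S N x ^ r) atTop (𝓝 (g x ^ r)) :=
      (ENNReal.continuous_rpow_const.tendsto _).comp htd
    exact le_of_tendsto htd2 (Eventually.of_forall fun N => le_iSup (fun N => S N x ^ r) N)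
  have hgint : ∫⁻ x, g x ^ r ∂μ ≤ 2 ^ r := by
    simp_rw [hgr]
    rw [lintegral_iSup (fun N => (hS_meas N).pow_const r)
      (fun N M h x => ENNReal.rpow_le_rpow (hmono x h) hr0.le)]
    exact iSup_le hSbound
  have hgfin : ∀ᵐ x ∂μ, g x ≠ ∞ := by
    have h1 : ∀ᵐ x ∂μ, g x ^ r < ∞ := ae_lt_top (hg_meas.pow_const r)
      (lt_of_le_of_lt hgint (ENNReal.rpow_lt_top_of_nonneg hr0.le (by norm_num))).ne
    filter_upwards [h1] with x hx h2
    rw [h2, ENNReal.top_rpow_of_pos hr0] at hx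
    exact (lt_irrefl _ hx)
  -- the Lp function f
  set f : ℝ → ℝ := fun x => (g x).toReal with hf_def
  have hmemf : MemLp f p μ := by
    refine ⟨hg_meas.ennreal_toReal.aestronglyMeasurable, ?_⟩
    rw [eLpNorm_eq_lintegral_rpow_enorm_toReal hp0 hp]
    refine ENNReal.rpow_lt_top_of_nonneg (by positivity) ?_
    refine (lt_of_le_of_lt (lintegral_mono fun x => ?_)
      (lt_of_le_of_lt hgint (ENNReal.rpow_lt_top_of_nonneg hr0.le (by norm_num)))).ne
    have h1 : ‖f x‖ₑ ≤ g x := by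
      rw [hf_def, Real.enorm_eq_ofReal ENNReal.toReal_nonneg]
      exact ENNReal.ofReal_toReal_le
    exact ENNReal.rpow_le_rpow h1 hr0.le
  have happ := hmap f hmemf
  set I := ∫⁻ x, ‖f (x - t)‖ₑ ^ r ∂μ with hI_def
  have hI : I ≠ ∞ := by
    intro hItop
    have h2 := happ.2
    rw [eLpNorm_eq_lintegral_rpow_enorm_toReal hp0 hp] at h2
    rw [← hr_def, ← hI_def] at h2
    rw [hItop, ENNReal.top_rpow_of_pos (by positivity)] at h2
    exact (lt_irrefl _ h2)
  -- translate of the null set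
  have hN0 : MeasurableSet {y : ℝ | g y = ∞} := hg_meas (measurableSet_singleton ∞)
  have hN0null : μ {y : ℝ | g y = ∞} = 0 := by
    have h9 := hgfin
    rw [MeasureTheory.ae_iff] at h9
    simpa using h9
  have htnull : μ ((· - t) ⁻¹' {y : ℝ | g y = ∞}) = 0 :=
    (hqti _ hN0).1 hN0null
  have hgt_ae : ∀ᵐ x ∂μ, g (x - t) ≠ ∞ := by
    rw [MeasureTheory.ae_iff]
    simpa using htnull
  -- lower bound for each n
  have hlow : ∀ n : ℕ, (2 : ℝ≥0∞) ^ ((n : ℝ) * r) ≤ I := by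
    intro n
    have h1 : ∀ᵐ x ∂μ, ((· - t) ⁻¹' B n).indicator (fun _ => a n ^ r) x ≤
        ‖f (x - t)‖ₑ ^ r := by
      filter_upwards [hgt_ae] with x hx
      have h2 : ‖f (x - t)‖ₑ = g (x - t) := by
        rw [hf_def, Real.enorm_eq_ofReal ENNReal.toReal_nonneg, ENNReal.ofReal_toReal hx]
      by_cases hxB : x ∈ (· - t) ⁻¹' B n
      · rw [Set.indicator_of_mem hxB, h2]
        refine ENNReal.rpow_le_rpow ?_ hr0.le
        have h3 : ind n (x - t) ≤ g (x - t) :=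
          ENNReal.le_tsum (f := fun m => ind m (x - t)) n
        simp only [hind_def, Set.indicator_of_mem (Set.mem_preimage.1 hxB)] at h3
        exact h3
      · rw [Set.indicator_of_notMem hxB]
        exact zero_le
    have h4 : a n ^ r * μ ((· - t) ⁻¹' B n) ≤ I := by
      rw [hI_def, ← lintegral_indicator_const (show MeasurableSet ((· - t) ⁻¹' B n) from
        (hBmeas n).preimage (measurable_id.sub_const t)) (a n ^ r)]
      exact lintegral_mono_ae h1
    calc (2 : ℝ≥0∞) ^ ((n : ℝ) * r)
        = (2 : ℝ≥0∞) ^ (-(n : ℝ) * r) * (μ (B n))⁻¹ *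
          ((2 : ℝ≥0∞) ^ (2 * (n : ℝ) * r) * μ (B n)) := by
          rw [show (2 : ℝ≥0∞) ^ (-(n : ℝ) * r) * (μ (B n))⁻¹ *
              ((2 : ℝ≥0∞) ^ (2 * (n : ℝ) * r) * μ (B n)) =
              ((2 : ℝ≥0∞) ^ (-(n : ℝ) * r) * (2 : ℝ≥0∞) ^ (2 * (n : ℝ) * r)) *
              ((μ (B n))⁻¹ * μ (B n)) by ring]
          rw [ENNReal.inv_mul_cancel (hB0 n) (hBfin n), mul_one,
            ← ENNReal.rpow_add _ _ (by norm_num) (by norm_num)]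
          congr 1
          ring
      _ ≤ (2 : ℝ≥0∞) ^ (-(n : ℝ) * r) * (μ (B n))⁻¹ * μ ((· - t) ⁻¹' B n) :=
          mul_le_mul_right (hν n) _
      _ = a n ^ r * μ ((· - t) ⁻¹' B n) := by rw [han_r n]
      _ ≤ I := h4
  -- contradiction
  obtain ⟨n, hn⟩ := ENNReal.exists_nat_gt hI
  have h5 : (n : ℝ≥0∞) < 2 ^ n := by
    exact_mod_cast Nat.lt_two_pow_self
  have h6 : (2 : ℝ≥0∞) ^ n ≤ I := by
    refine le_trans ?_ (hlow n)
    rw [← ENNReal.rpow_natCast]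
    exact ENNReal.rpow_le_rpow_of_exponent_le (by norm_num)
      (le_mul_of_one_le_right (Nat.cast_nonneg n) hr1)
  exact absurd ((hn.trans h5).trans_le h6) (lt_irrefl I)

lemma keyC (μ : Measure ℝ) [IsFiniteMeasureOnCompacts μ] :
    Measurable fun t : ℝ => ⨆ q : ℚ × ℚ, μ ((· - t) ⁻¹' closedBall (q.1 : ℝ) (q.2 : ℝ)) /
      μ (closedBall (q.1 : ℝ) (q.2 : ℝ)) := by
  refine Measurable.iSup fun q => ?_
  refine Measurable.div ?_ measurable_const
  have hs : MeasurableSet {p : ℝ × ℝ | p.2 - p.1 ∈ closedBall (q.1 : ℝ) (q.2 : ℝ)} :=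
    (measurable_snd.sub measurable_fst) measurableSet_closedBall
  exact measurable_measure_prodMk_left (ν := μ) hs

lemma keyD (c : ℝ → ℝ≥0∞) (hsub : ∀ s u : ℝ, c (s + u) ≤ c s * c u)
    (ε : ℝ) (hε : 0 < ε) (M : ℝ≥0∞) (hloc : ∀ u : ℝ, |u| < ε → c u ≤ M) :
    ∀ k : ℕ, ∀ s : ℝ, |s| < ((k : ℝ) + 1) * (ε / 2) → c s ≤ (M + 1) ^ (k + 1) := by
  intro k
  induction k with
  | zero =>
      intro s hs
      have h1 : |s| < ε := by
        have : ((0 : ℕ) : ℝ) + 1 = 1 := by norm_num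
        rw [this, one_mul] at hs
        linarith
      refine le_trans (hloc s h1) ?_
      rw [pow_one]
      exact le_add_self.trans_eq (add_comm 1 M) |>.trans_eq rfl
  | succ k ih =>
      intro s hs
      have hcast : ((k + 1 : ℕ) : ℝ) + 1 = (k : ℝ) + 2 := by push_cast; ring
      rw [hcast] at hs
      have hone : (1 : ℝ≥0∞) ≤ M + 1 := le_add_self
      rcases lt_or_ge |s| (((k : ℝ) + 1) * (ε / 2)) with h | h
      · refine le_trans (ih s h) ?_
        rw [pow_succ (M + 1) (k + 1)]
        exact le_mul_of_one_le_right' hone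
      · have key : ∀ x y : ℝ, s = x + y → |y| < ε → |x| < ((k : ℝ) + 1) * (ε / 2) →
            c s ≤ (M + 1) ^ (k + 2) := by
          intro x y hxy hy hx
          rw [hxy]
          calc c (x + y) ≤ c x * c y := hsub x y
            _ ≤ (M + 1) ^ (k + 1) * (M + 1) :=
              mul_le_mul' (ih x hx) (le_trans (hloc y hy) le_self_add)
            _ = (M + 1) ^ (k + 2) := (pow_succ _ _).symm
        rcases le_or_gt 0 s with hs0 | hs0
        · have habs : |s| = s := abs_of_nonneg hs0
          rw [habs] at hs h
          refine key (s - ε / 2) (ε / 2) (by ring) (by rw [abs_of_pos (by linarith)]; linarith) ?_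
          have h2 : 0 ≤ s - ε / 2 := by nlinarith
          rw [abs_of_nonneg h2]
          linarith
        · have habs : |s| = -s := abs_of_neg hs0
          rw [habs] at hs h
          refine key (s + ε / 2) (-(ε / 2)) (by ring)
            (by rw [abs_neg, abs_of_pos (by linarith)]; linarith) ?_
          have h2 : s + ε / 2 ≤ 0 := by nlinarith
          rw [abs_of_nonpos h2]
          linarith

/-- If the translations act on L^p(μ), then on any compact interval [a,b] of translation
parameters there is a uniform constant C with μ(E + t) ≤ C μ(E). -/
theorem stmt5 (p : ℝ≥0∞) (hp1 : 1 ≤ p) (hp : p ≠ ⊤)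
    (μ : Measure ℝ) [IsFiniteMeasureOnCompacts μ]
    (hqti : ∀ E : Set ℝ, MeasurableSet E → ∀ t : ℝ, (μ E = 0 ↔ μ ((· - t) ⁻¹' E) = 0))
    (hmap : ∀ t : ℝ, ∀ f : ℝ → ℝ, MemLp f p μ → MemLp (fun x => f (x - t)) p μ)
    (a b : ℝ) :
    ∃ C : ℝ≥0∞, 0 < C ∧ C ≠ ⊤ ∧ ∀ t ∈ Set.Icc a b, ∀ E : Set ℝ, MeasurableSet E →
      μ E < ⊤ → μ ((· - t) ⁻¹' E) ≤ C * μ E := by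
  set c : ℝ → ℝ≥0∞ := fun t => ⨆ q : ℚ × ℚ, μ ((· - t) ⁻¹' closedBall (q.1 : ℝ) (q.2 : ℝ)) /
      μ (closedBall (q.1 : ℝ) (q.2 : ℝ)) with hc_def
  have hA : ∀ t : ℝ, ∀ E : Set ℝ, MeasurableSet E → μ ((· - t) ⁻¹' E) ≤ c t * μ E :=
    fun t E hE => keyA μ t (fun E hE => (hqti E hE t).1) E hE
  have hfin : ∀ t : ℝ, c t ≠ ∞ :=
    fun t => keyB p hp1 hp μ t (fun E hE => hqti E hE t) (fun f hf => hmap t f hf)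
  have hmeas : Measurable c := keyC μ
  have hsub : ∀ s u : ℝ, c (s + u) ≤ c s * c u := by
    intro s u
    refine iSup_le fun q => ?_
    have h1 : (fun x : ℝ => x - (s + u)) ⁻¹' closedBall (q.1 : ℝ) (q.2 : ℝ) =
        (· - s) ⁻¹' ((· - u) ⁻¹' closedBall (q.1 : ℝ) (q.2 : ℝ)) := by
      ext x
      simp [sub_sub]
    have h2 : μ ((· - (s + u)) ⁻¹' closedBall (q.1 : ℝ) (q.2 : ℝ)) ≤
        c s * c u * μ (closedBall (q.1 : ℝ) (q.2 : ℝ)) := by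
      rw [h1, mul_assoc]
      refine le_trans (hA s _ (measurableSet_closedBall.preimage
        (measurable_id.sub_const u))) ?_
      exact mul_le_mul_right (hA u _ measurableSet_closedBall) _
    exact ENNReal.div_le_of_le_mul h2
  -- Steinhaus argument
  set A : ℕ → Set ℝ := fun n => {t : ℝ | c t ≤ n ∧ c (-t) ≤ n} ∩ Icc (0 : ℝ) 1 with hA_def
  have hAmeas : ∀ n, MeasurableSet (A n) := by
    intro n
    refine MeasurableSet.inter ?_ measurableSet_Icc
    exact MeasurableSet.inter (hmeas measurableSet_Iic)
      ((hmeas.comp measurable_neg) measurableSet_Iic)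
  have hcover : Icc (0 : ℝ) 1 ⊆ ⋃ n, A n := by
    intro t ht
    obtain ⟨n₁, hn₁⟩ := ENNReal.exists_nat_gt (hfin t)
    obtain ⟨n₂, hn₂⟩ := ENNReal.exists_nat_gt (hfin (-t))
    refine Set.mem_iUnion.2 ⟨max n₁ n₂, ⟨⟨?_, ?_⟩, ht⟩⟩
    · exact le_trans hn₁.le (Nat.cast_le.2 (le_max_left _ _))
    · exact le_trans hn₂.le (Nat.cast_le.2 (le_max_right _ _))
  have hex : ∃ n, volume (A n) ≠ 0 := by
    by_contra hall
    push_neg at hall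
    have h1 : volume (Icc (0 : ℝ) 1) = 0 :=
      le_antisymm (le_trans (measure_mono hcover) (le_of_eq (measure_iUnion_null hall)))
        zero_le
    rw [Real.volume_Icc] at h1
    simp at h1
  obtain ⟨n, hn⟩ := hex
  have hnhds : A n - A n ∈ 𝓝 (0 : ℝ) :=
    MeasureTheory.Measure.sub_mem_nhds_zero_of_addHaar_pos volume (A n) (hAmeas n)
      (pos_iff_ne_zero.2 hn)
  obtain ⟨ε, hε, hball⟩ := Metric.mem_nhds_iff.1 hnhds
  set M : ℝ≥0∞ := (n : ℝ≥0∞) * n with hM_def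
  have hloc : ∀ u : ℝ, |u| < ε → c u ≤ M := by
    intro u hu
    have hu2 : u ∈ Metric.ball (0 : ℝ) ε := by
      rw [Metric.mem_ball, Real.dist_eq, sub_zero]
      exact hu
    obtain ⟨x, hx, y, hy, hxy⟩ := Set.mem_sub.1 (hball hu2)
    have h1 : c u = c (x + -y) := by rw [← hxy]; ring_nf
    rw [h1]
    refine le_trans (hsub x (-y)) ?_
    exact mul_le_mul' hx.1.1 hy.1.2
  -- global bound on [a, b]
  set R : ℝ := max |a| |b| with hR_def
  obtain ⟨K, hK⟩ := exists_nat_gt (R / (ε / 2))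
  have hRK : R < ((K : ℝ) + 1) * (ε / 2) := by
    have h2 : 0 < ε / 2 := by linarith
    have := (div_lt_iff₀ h2).1 hK
    nlinarith
  refine ⟨(M + 1) ^ (K + 1), ?_, ?_, ?_⟩
  · exact lt_of_lt_of_le zero_lt_one (one_le_pow₀ le_add_self)
  · refine ENNReal.pow_ne_top (ENNReal.add_ne_top.2 ⟨?_, by norm_num⟩)
    exact ENNReal.mul_ne_top (ENNReal.natCast_ne_top n) (ENNReal.natCast_ne_top n)
  · intro t ht E hE _
    have htR : |t| ≤ R := by
      rw [abs_le]
      constructor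
      · refine le_trans ?_ ht.1
        rw [hR_def]
        have : |a| ≤ max |a| |b| := le_max_left _ _
        have h3 : -max |a| |b| ≤ -|a| := neg_le_neg this
        exact le_trans h3 (neg_abs_le a)
      · exact le_trans ht.2 (le_trans (le_abs_self b) (le_max_right _ _))
    have hct : c t ≤ (M + 1) ^ (K + 1) :=
      keyD c hsub ε hε M hloc K t (lt_of_le_of_lt htR hRK)
    exact le_trans (hA t E hE) (mul_le_mul_left hct _)
end

section
/- Fix 1 ≤ p < ∞. Let μ be a Radon measure on ℝ such that each translation T_t maps L^p(μ) to itself. Then for every compact neighborhood N of 0 there is a constant C_p with ‖T_t f‖_p ≤ C_p ‖f‖_p for all t ∈ N and all f ∈ L^p(μ), i.e., the operator norms ‖T_t‖ are uniformly bounded on compact sets of t. -/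
open MeasureTheory ENNReal Pointwise

namespace Stmt6Aux

/-- Finite unions of rational open intervals. -/
noncomputable def Us (s : Finset (ℚ × ℚ)) : Set ℝ :=
  ⋃ qr ∈ s, Set.Ioo (qr.1 : ℝ) (qr.2 : ℝ)

lemma isOpen_Us (s : Finset (ℚ × ℚ)) : IsOpen (Us s) :=
  isOpen_biUnion fun _ _ => isOpen_Ioo

lemma measurableSet_Us (s : Finset (ℚ × ℚ)) : MeasurableSet (Us s) :=
  (isOpen_Us s).measurableSet

lemma Us_ne_top (μ : Measure ℝ) [IsFiniteMeasureOnCompacts μ] (s : Finset (ℚ × ℚ)) :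
    μ (Us s) ≠ ⊤ := by
  have h : μ (Us s) ≤ ∑ qr ∈ s, μ (Set.Ioo (qr.1 : ℝ) (qr.2 : ℝ)) :=
    measure_biUnion_finset_le s _
  refine ne_top_of_le_ne_top ?_ h
  refine (ENNReal.sum_lt_top.2 fun qr _ => ?_).ne
  exact lt_of_le_of_lt (measure_mono Set.Ioo_subset_Icc_self) isCompact_Icc.measure_lt_top

/-- The pointwise "operator norm to the `p`" function, computed on a countable family. -/
noncomputable def c (μ : Measure ℝ) (t : ℝ) : ℝ≥0∞ :=
  ⨆ s : Finset (ℚ × ℚ), μ ((· - t) ⁻¹' Us s) / μ (Us s)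

lemma measurable_pre (μ : Measure ℝ) [SFinite μ] {S : Set ℝ} (hS : MeasurableSet S) :
    Measurable fun t => μ ((· - t) ⁻¹' S) := by
  have h : ∀ t, μ ((· - t) ⁻¹' S) = ∫⁻ x, S.indicator (fun _ => (1:ℝ≥0∞)) (x - t) ∂μ := by
    intro t
    have h2 : (fun x => S.indicator (fun _ => (1:ℝ≥0∞)) (x - t))
        = ((· - t) ⁻¹' S).indicator (fun _ => 1) := by
      ext x
      by_cases hx : x - t ∈ S <;> simp [Set.indicator, hx]
    rw [h2]
    exact (lintegral_indicator_one (hS.preimage (measurable_sub_const t))).symm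
  simp_rw [h]
  exact Measurable.lintegral_prod_right
    ((measurable_const.indicator hS).comp (measurable_snd.sub measurable_fst))

lemma measurable_c (μ : Measure ℝ) [SFinite μ] : Measurable (c μ) := by
  refine Measurable.iSup fun s => ?_
  exact (measurable_pre μ (measurableSet_Us s)).div_const _

section
variable {μ : Measure ℝ} [IsFiniteMeasureOnCompacts μ]
variable (hqti : ∀ E : Set ℝ, MeasurableSet E → ∀ t : ℝ, (μ E = 0 ↔ μ ((· - t) ⁻¹' E) = 0))

include hqti in
lemma basic_bound (t : ℝ) (s : Finset (ℚ × ℚ)) :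
    μ ((· - t) ⁻¹' Us s) ≤ c μ t * μ (Us s) := by
  by_cases h0 : μ (Us s) = 0
  · rw [(hqti _ (measurableSet_Us s) t).mp h0]
    exact zero_le
  · calc μ ((· - t) ⁻¹' Us s) = μ ((· - t) ⁻¹' Us s) / μ (Us s) * μ (Us s) :=
        (ENNReal.div_mul_cancel h0 (Us_ne_top μ s)).symm
    _ ≤ c μ t * μ (Us s) := by
        have h := le_iSup (fun s => μ ((· - t) ⁻¹' Us s) / μ (Us s)) s
        exact mul_le_mul_left h _

include hqti in
lemma open_bound (t : ℝ) {U : Set ℝ} (hU : IsOpen U) :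
    μ ((· - t) ⁻¹' U) ≤ c μ t * μ U := by
  classical
  -- U is the union of the rational intervals it contains
  have hUeq : U = ⋃ qr ∈ {qr : ℚ × ℚ | Set.Ioo (qr.1 : ℝ) qr.2 ⊆ U}, Set.Ioo (qr.1:ℝ) qr.2 := by
    ext x
    constructor
    · intro hx
      obtain ⟨ε, hε, hball⟩ := Metric.isOpen_iff.1 hU x hx
      rw [Real.ball_eq_Ioo] at hball
      obtain ⟨q, hq1, hq2⟩ := exists_rat_btwn (show x - ε < x by linarith)
      obtain ⟨r, hr1, hr2⟩ := exists_rat_btwn (show x < x + ε by linarith)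
      refine Set.mem_biUnion (show (q, r) ∈ _ from ?_) ⟨hq2, hr1⟩
      intro y hy
      exact hball ⟨lt_trans hq1 hy.1, lt_trans hy.2 hr2⟩
    · intro hx
      obtain ⟨qr, hqr, hxqr⟩ := Set.mem_iUnion₂.1 hx
      exact hqr hxqr
  -- enumerate and take finite stages
  let e : ℕ → ℚ × ℚ := fun n => (Denumerable.eqv (ℚ × ℚ)).symm n
  have he : Function.Surjective e := (Denumerable.eqv (ℚ × ℚ)).symm.surjective
  let sn : ℕ → Finset (ℚ × ℚ) := fun n =>
    ((Finset.range n).image e).filter fun qr => Set.Ioo (qr.1 : ℝ) qr.2 ⊆ U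
  have hmono : Monotone fun n => Us (sn n) := by
    intro m n hmn
    apply Set.iUnion₂_mono'
    intro qr hqr
    refine ⟨qr, ?_, le_rfl⟩
    obtain ⟨h1, h2⟩ := Finset.mem_filter.1 hqr
    obtain ⟨k, hk, hke⟩ := Finset.mem_image.1 h1
    exact Finset.mem_filter.2 ⟨Finset.mem_image.2
      ⟨k, Finset.mem_range.2 (lt_of_lt_of_le (Finset.mem_range.1 hk) hmn), hke⟩, h2⟩
  have hsub : ∀ n, Us (sn n) ⊆ U := by
    intro n
    apply Set.iUnion₂_subset
    intro qr hqr
    exact (Finset.mem_filter.1 hqr).2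
  have hunion : (⋃ n, Us (sn n)) = U := by
    apply Set.Subset.antisymm (Set.iUnion_subset hsub)
    rw [hUeq]
    intro x hx
    obtain ⟨qr, hqr, hxqr⟩ := Set.mem_iUnion₂.1 hx
    obtain ⟨k, hk⟩ := he qr
    refine Set.mem_iUnion.2 ⟨k + 1, ?_⟩
    refine Set.mem_biUnion ?_ hxqr
    exact Finset.mem_filter.2 ⟨Finset.mem_image.2
      ⟨k, Finset.mem_range.2 (Nat.lt_succ_self k), hk⟩, hqr⟩
  have hpre : (· - t) ⁻¹' U = ⋃ n, (· - t) ⁻¹' Us (sn n) := by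
    rw [← hunion, Set.preimage_iUnion]
  rw [hpre]
  have hm2 : Monotone fun n => (· - t) ⁻¹' Us (sn n) := fun m n h => Set.preimage_mono (hmono h)
  rw [hm2.measure_iUnion]
  refine iSup_le fun n => ?_
  calc μ ((· - t) ⁻¹' Us (sn n)) ≤ c μ t * μ (Us (sn n)) := basic_bound hqti t (sn n)
  _ ≤ c μ t * μ U := mul_le_mul_right (measure_mono (hsub n)) _

include hqti in
lemma meas_bound [μ.OuterRegular] (t : ℝ) (hct : c μ t ≠ ⊤) {E : Set ℝ}
    (_hE : MeasurableSet E) :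
    μ ((· - t) ⁻¹' E) ≤ c μ t * μ E := by
  by_cases hc0 : c μ t = 0
  · have huniv : μ ((· - t) ⁻¹' (Set.univ : Set ℝ)) ≤ 0 := by
      have := open_bound hqti t isOpen_univ
      rwa [hc0, zero_mul] at this
    rw [Set.preimage_univ] at huniv
    have : μ ((· - t) ⁻¹' E) = 0 :=
      le_antisymm (le_trans (measure_mono (Set.subset_univ _)) huniv) zero_le
    simp [this]
  by_cases hEtop : μ E = ⊤
  · rw [hEtop, ENNReal.mul_top hc0]
    exact le_top
  have key : ∀ r : ℝ≥0∞, μ E < r → μ ((· - t) ⁻¹' E) ≤ c μ t * r := by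
    intro r hr
    obtain ⟨U, hEU, hUopen, hUr⟩ := Set.exists_isOpen_lt_of_lt E r hr
    calc μ ((· - t) ⁻¹' E) ≤ μ ((· - t) ⁻¹' U) := measure_mono (Set.preimage_mono hEU)
    _ ≤ c μ t * μ U := open_bound hqti t hUopen
    _ ≤ c μ t * r := mul_le_mul_right hUr.le _
  have hdiv : μ ((· - t) ⁻¹' E) / c μ t ≤ μ E := by
    refine le_of_forall_gt_imp_ge_of_dense fun r hr => ?_
    exact (ENNReal.div_le_iff_le_mul (Or.inl hc0) (Or.inl hct)).2
      (le_trans (key r hr) (by rw [mul_comm]))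
  calc μ ((· - t) ⁻¹' E) = μ ((· - t) ⁻¹' E) / c μ t * c μ t := by
        rw [ENNReal.div_mul_cancel hc0 hct]
  _ ≤ μ E * c μ t := mul_le_mul_left hdiv _
  _ = c μ t * μ E := mul_comm _ _

end

lemma iSup_rpow {ι : Sort*} (f : ι → ℝ≥0∞) {r : ℝ} (hr : 0 < r) :
    (⨆ i, f i) ^ r = ⨆ i, f i ^ r := by
  refine le_antisymm ?_ (iSup_le fun i => ENNReal.rpow_le_rpow (le_iSup f i) hr.le)
  have h : (⨆ i, f i) ≤ (⨆ i, f i ^ r) ^ (1 / r) := by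
    refine iSup_le fun i => ?_
    have : f i = (f i ^ r) ^ (1 / r) := by
      rw [← ENNReal.rpow_mul, mul_one_div, div_self hr.ne', ENNReal.rpow_one]
    rw [this]
    exact ENNReal.rpow_le_rpow (le_iSup (fun i => f i ^ r) i) (by positivity)
  calc (⨆ i, f i) ^ r ≤ ((⨆ i, f i ^ r) ^ (1 / r)) ^ r := ENNReal.rpow_le_rpow h hr.le
  _ = ⨆ i, f i ^ r := by
      rw [← ENNReal.rpow_mul, one_div_mul_cancel hr.ne', ENNReal.rpow_one]

lemma c_ne_top (p : ℝ≥0∞) (hp1 : 1 ≤ p) (hp : p ≠ ⊤)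
    (μ : Measure ℝ) [IsFiniteMeasureOnCompacts μ]
    (hqti : ∀ E : Set ℝ, MeasurableSet E → ∀ t : ℝ, (μ E = 0 ↔ μ ((· - t) ⁻¹' E) = 0))
    (hmap : ∀ t : ℝ, ∀ f : ℝ → ℝ, MemLp f p μ → MemLp (fun x => f (x - t)) p μ)
    (t : ℝ) : c μ t ≠ ⊤ := by
  have hp0 : p ≠ 0 := fun h => by simp [h] at hp1
  set P := p.toReal with hPdef
  have hP0 : 0 < P := ENNReal.toReal_pos hp0 hp
  intro htop
  have hsel : ∀ k : ℕ, ∃ s : Finset (ℚ × ℚ),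
      (2:ℝ≥0∞) ^ (2*k) < μ ((· - t) ⁻¹' Us s) / μ (Us s) := by
    intro k
    have : ((2:ℝ≥0∞) ^ (2*k)) < c μ t := htop ▸ ENNReal.pow_lt_top (by norm_num)
    exact lt_iSup_iff.1 this
  choose s hs using hsel
  set S : ℕ → Set ℝ := fun k => Us (s k) with hSdef
  have hSmeas : ∀ k, MeasurableSet (S k) := fun k => measurableSet_Us (s k)
  have hStop : ∀ k, μ (S k) ≠ ⊤ := fun k => Us_ne_top μ (s k)
  have hS0 : ∀ k, μ (S k) ≠ 0 := by
    intro k h0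
    have h1 := (hqti _ (hSmeas k) t).mp h0
    have := hs k
    rw [h1, ENNReal.zero_div] at this
    exact absurd this (by simp)
  have hSlow : ∀ k, (2:ℝ≥0∞) ^ (2*k) * μ (S k) ≤ μ ((· - t) ⁻¹' S k) := by
    intro k
    have := (hs k).le
    rwa [ENNReal.le_div_iff_mul_le (Or.inl (hS0 k)) (Or.inl (hStop k))] at this
  set B : ℕ → ℝ≥0∞ := fun k => (2:ℝ≥0∞)⁻¹ ^ k / μ (S k) with hBdef
  have hB : ∀ k, B k * μ (S k) = (2:ℝ≥0∞)⁻¹ ^ k := fun k =>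
    ENNReal.div_mul_cancel (hS0 k) (hStop k)
  set A : ℕ → ℝ≥0∞ := fun k => B k ^ (1/P) with hAdef
  have hAP : ∀ k, A k ^ P = B k := by
    intro k
    show (B k ^ (1/P)) ^ P = B k
    rw [← ENNReal.rpow_mul, one_div_mul_cancel hP0.ne', ENNReal.rpow_one]
  set G : ℝ → ℝ≥0∞ := fun x => ⨆ k, (S k).indicator (fun _ => A k) x with hGdef
  have hGmeas : Measurable G := by
    refine Measurable.iSup fun k => ?_
    exact measurable_const.indicator (hSmeas k)
  have hGP : ∀ x, G x ^ P = ⨆ k, (S k).indicator (fun _ => A k ^ P) x := by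
    intro x
    rw [hGdef]
    show (⨆ k, (S k).indicator (fun _ => A k) x) ^ P = _
    rw [iSup_rpow _ hP0]
    congr 1; ext k
    by_cases hx : x ∈ S k <;>
      simp [Set.indicator, hx, ENNReal.zero_rpow_of_pos hP0]
  have hGPle : ∀ x, G x ^ P ≤ ∑' k, (S k).indicator (fun _ => A k ^ P) x := by
    intro x
    rw [hGP x]
    exact iSup_le fun k => ENNReal.le_tsum k
  have hGint : ∫⁻ x, G x ^ P ∂μ ≤ 2 := by
    calc ∫⁻ x, G x ^ P ∂μ ≤ ∫⁻ x, ∑' k, (S k).indicator (fun _ => A k ^ P) x ∂μ :=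
          lintegral_mono hGPle
    _ = ∑' k, ∫⁻ x, (S k).indicator (fun _ => A k ^ P) x ∂μ :=
          lintegral_tsum fun k => (measurable_const.indicator (hSmeas k)).aemeasurable
    _ = ∑' k, A k ^ P * μ (S k) := by
          congr 1; ext k
          exact lintegral_indicator_const (hSmeas k) _
    _ = ∑' k, (2:ℝ≥0∞)⁻¹ ^ k := by
          congr 1; ext k; rw [hAP k, hB k]
    _ = (1 - 2⁻¹)⁻¹ := ENNReal.tsum_geometric _
    _ ≤ 2 := by norm_num [ENNReal.one_sub_inv_two]
  set f : ℝ → ℝ := fun x => (G x).toReal with hfdef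
  have hfmeas : Measurable f := hGmeas.ennreal_toReal
  have hcoe : ∀ x, G x ≠ ⊤ → (‖f x‖₊ : ℝ≥0∞) = G x := by
    intro x hx
    have h1 : (‖f x‖₊ : ℝ≥0∞) = ENNReal.ofReal (G x).toReal := by
      rw [← enorm_eq_nnnorm, ← ofReal_norm, Real.norm_of_nonneg ENNReal.toReal_nonneg]
    rw [h1, ENNReal.ofReal_toReal hx]
  have hfnorm : ∀ x, (‖f x‖₊ : ℝ≥0∞) ^ P ≤ G x ^ P := by
    intro x
    refine ENNReal.rpow_le_rpow ?_ hP0.le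
    by_cases hx : G x = ⊤
    · simp [hfdef, hx]
    · exact le_of_eq (hcoe x hx)
  have hfmem : MemLp f p μ := by
    refine ⟨hfmeas.aestronglyMeasurable, ?_⟩
    rw [eLpNorm_eq_lintegral_rpow_enorm_toReal hp0 hp]; simp only [enorm_eq_nnnorm]
    refine ENNReal.rpow_lt_top_of_nonneg (by positivity) ?_
    exact ne_top_of_le_ne_top (by norm_num) (le_trans (lintegral_mono hfnorm) hGint)
  have hmem2 := hmap t f hfmem
  have hL : ∫⁻ x, (‖f (x - t)‖₊ : ℝ≥0∞) ^ P ∂μ ≠ ⊤ := by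
    intro htop2
    have := hmem2.2
    rw [eLpNorm_eq_lintegral_rpow_enorm_toReal hp0 hp] at this; simp only [enorm_eq_nnnorm] at this
    rw [htop2, ENNReal.top_rpow_of_pos (one_div_pos.mpr hP0)] at this
    exact lt_irrefl _ this
  set ν : Measure ℝ := Measure.map (fun x => x - t) μ with hνdef
  have habs : ν ≪ μ := by
    refine Measure.AbsolutelyContinuous.mk fun E hE h0 => ?_
    rw [hνdef, Measure.map_apply (measurable_sub_const t) hE]
    exact (hqti E hE t).mp h0
  have hνap : ∀ E : Set ℝ, MeasurableSet E → ν E = μ ((· - t) ⁻¹' E) := fun E hE =>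
    Measure.map_apply (measurable_sub_const t) hE
  have hchange : ∫⁻ x, (‖f (x - t)‖₊ : ℝ≥0∞) ^ P ∂μ = ∫⁻ y, (‖f y‖₊ : ℝ≥0∞) ^ P ∂ν := by
    rw [hνdef, lintegral_map (hfmeas.nnnorm.coe_nnreal_ennreal.pow_const P)
      (measurable_sub_const t)]
  have hGae : ∀ᵐ x ∂μ, G x < ⊤ := by
    have h1 : ∀ᵐ x ∂μ, G x ^ P < ⊤ :=
      ae_lt_top (hGmeas.pow_const P) (ne_top_of_le_ne_top (by norm_num) hGint)
    exact h1.mono fun x hx => (ENNReal.rpow_lt_top_iff_of_pos hP0).1 hx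
  have hGaeν : ∀ᵐ x ∂ν, G x < ⊤ := habs.ae_le hGae
  have hlow : ∀ k : ℕ, (2:ℝ≥0∞) ^ k ≤ ∫⁻ y, (‖f y‖₊ : ℝ≥0∞) ^ P ∂ν := by
    intro k
    have hint : ∫⁻ y, (S k).indicator (fun _ => A k ^ P) y ∂ν ≤
        ∫⁻ y, (‖f y‖₊ : ℝ≥0∞) ^ P ∂ν := by
      refine lintegral_mono_ae (hGaeν.mono fun y hy => ?_)
      have h2 : (S k).indicator (fun _ => A k ^ P) y ≤ G y ^ P := by
        rw [hGP y]; exact le_iSup (fun k => (S k).indicator (fun _ => A k ^ P) y) k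
      refine le_trans h2 (le_of_eq ?_)
      rw [hcoe y hy.ne]
    have heval : ∫⁻ y, (S k).indicator (fun _ => A k ^ P) y ∂ν = A k ^ P * ν (S k) :=
      lintegral_indicator_const (hSmeas k) _
    have hνS : ν (S k) = μ ((· - t) ⁻¹' S k) := hνap _ (hSmeas k)
    calc (2:ℝ≥0∞) ^ k = (2:ℝ≥0∞)⁻¹ ^ k * ((2:ℝ≥0∞) ^ (2*k)) := by
          rw [← ENNReal.inv_pow, two_mul, pow_add, ← mul_assoc,
            ENNReal.inv_mul_cancel (pow_ne_zero k (by norm_num)) (ENNReal.pow_ne_top (by norm_num)),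
            one_mul]
    _ = B k * μ (S k) * (2:ℝ≥0∞) ^ (2*k) := by rw [hB k]
    _ = B k * ((2:ℝ≥0∞) ^ (2*k) * μ (S k)) := by ring
    _ ≤ B k * μ ((· - t) ⁻¹' S k) := mul_le_mul_right (hSlow k) _
    _ = A k ^ P * ν (S k) := by rw [hAP k, hνS]
    _ ≤ ∫⁻ y, (‖f y‖₊ : ℝ≥0∞) ^ P ∂ν := heval ▸ hint
  rw [hchange] at hL
  obtain ⟨n, hn⟩ := ENNReal.exists_nat_gt hL
  have h2n : ((n:ℝ≥0∞)) ≤ 2 ^ n := by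
    calc ((n:ℝ≥0∞)) ≤ ((2^n : ℕ) : ℝ≥0∞) := by
          exact_mod_cast Nat.le_of_lt Nat.lt_two_pow_self
    _ = 2 ^ n := by push_cast; ring
  exact absurd (le_trans h2n (hlow n)) (not_le.2 hn)

section
variable (μ : Measure ℝ) [IsFiniteMeasureOnCompacts μ] [μ.OuterRegular]

lemma c_submul
    (hqti : ∀ E : Set ℝ, MeasurableSet E → ∀ t : ℝ, (μ E = 0 ↔ μ ((· - t) ⁻¹' E) = 0))
    (u t : ℝ) (hcu : c μ u ≠ ⊤) (hct : c μ t ≠ ⊤) :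
    c μ (u + t) ≤ c μ u * c μ t := by
  refine iSup_le fun fs => ?_
  have hpre : (· - (u + t)) ⁻¹' Us fs = (· - u) ⁻¹' ((· - t) ⁻¹' Us fs) := by
    ext x; simp [Set.mem_preimage, sub_sub]
  have h1 : μ ((· - (u + t)) ⁻¹' Us fs) ≤ c μ u * (c μ t * μ (Us fs)) := by
    rw [hpre]
    calc μ ((· - u) ⁻¹' ((· - t) ⁻¹' Us fs)) ≤ c μ u * μ ((· - t) ⁻¹' Us fs) :=
        meas_bound hqti u hcu ((measurableSet_Us fs).preimage (measurable_sub_const t))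
    _ ≤ c μ u * (c μ t * μ (Us fs)) :=
        mul_le_mul_right (meas_bound hqti t hct (measurableSet_Us fs)) _
  exact ENNReal.div_le_of_le_mul (by rw [mul_assoc]; exact h1)

lemma norm_est (p : ℝ≥0∞) (hp0 : p ≠ 0) (hp : p ≠ ⊤)
    (hqti : ∀ E : Set ℝ, MeasurableSet E → ∀ t : ℝ, (μ E = 0 ↔ μ ((· - t) ⁻¹' E) = 0))
    (t : ℝ) (hct : c μ t ≠ ⊤) (f : ℝ → ℝ) (hf : MemLp f p μ) :
    eLpNorm (fun x => f (x - t)) p μ ≤ c μ t ^ (1 / p.toReal) * eLpNorm f p μ := by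
  set P := p.toReal with hPdef
  have hP0 : 0 < P := ENNReal.toReal_pos hp0 hp
  set g : ℝ → ℝ := hf.1.mk f with hgdef
  have hgmeas : StronglyMeasurable g := hf.1.stronglyMeasurable_mk
  have hfg : f =ᵐ[μ] g := hf.1.ae_eq_mk
  have hfg' : (fun x => f (x - t)) =ᵐ[μ] fun x => g (x - t) := by
    obtain ⟨E, hEsub, hEmeas, hE0⟩ := exists_measurable_superset_of_null hfg
    have h1 : μ ((· - t) ⁻¹' E) = 0 := (hqti E hEmeas t).mp hE0
    refine measure_mono_null ?_ h1
    intro x hx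
    exact hEsub hx
  rw [eLpNorm_congr_ae hfg, eLpNorm_congr_ae hfg']
  set ν : Measure ℝ := Measure.map (fun x => x - t) μ with hνdef
  have hνle : ν ≤ c μ t • μ := by
    refine Measure.le_iff.2 fun E hE => ?_
    rw [hνdef, Measure.map_apply (measurable_sub_const t) hE, Measure.smul_apply, smul_eq_mul]
    exact meas_bound hqti t hct hE
  have hchange : ∫⁻ x, (‖g (x - t)‖₊ : ℝ≥0∞) ^ P ∂μ = ∫⁻ y, (‖g y‖₊ : ℝ≥0∞) ^ P ∂ν :=
    (lintegral_map (hgmeas.measurable.nnnorm.coe_nnreal_ennreal.pow_const P)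
      (measurable_sub_const t)).symm
  rw [eLpNorm_eq_lintegral_rpow_enorm_toReal hp0 hp, eLpNorm_eq_lintegral_rpow_enorm_toReal hp0 hp]
  simp only [enorm_eq_nnnorm]
  rw [← hPdef, hchange]
  calc (∫⁻ y, (‖g y‖₊ : ℝ≥0∞) ^ P ∂ν) ^ (1/P)
      ≤ (c μ t * ∫⁻ y, (‖g y‖₊ : ℝ≥0∞) ^ P ∂μ) ^ (1/P) := by
        refine ENNReal.rpow_le_rpow ?_ (by positivity)
        rw [← smul_eq_mul, ← lintegral_smul_measure]
        exact lintegral_mono' hνle le_rfl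
  _ = c μ t ^ (1/P) * (∫⁻ y, (‖g y‖₊ : ℝ≥0∞) ^ P ∂μ) ^ (1/P) :=
        ENNReal.mul_rpow_of_nonneg _ _ (by positivity)

end
end Stmt6Aux

open Stmt6Aux in
/-- If the translations act on L^p(μ), their operator norms are uniformly bounded on any
compact neighborhood of 0. -/
theorem stmt6 (p : ℝ≥0∞) (hp1 : 1 ≤ p) (hp : p ≠ ⊤)
    (μ : Measure ℝ) [IsFiniteMeasureOnCompacts μ]
    (hqti : ∀ E : Set ℝ, MeasurableSet E → ∀ t : ℝ, (μ E = 0 ↔ μ ((· - t) ⁻¹' E) = 0))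
    (hmap : ∀ t : ℝ, ∀ f : ℝ → ℝ, MemLp f p μ → MemLp (fun x => f (x - t)) p μ) :
    ∀ N : Set ℝ, IsCompact N → N ∈ nhds (0:ℝ) →
      ∃ C : ℝ≥0∞, C ≠ ⊤ ∧ ∀ t ∈ N, ∀ f : ℝ → ℝ, MemLp f p μ →
        eLpNorm (fun x => f (x - t)) p μ ≤ C * eLpNorm f p μ := by
  intro N hN _
  have hp0 : p ≠ 0 := fun h => by simp [h] at hp1
  have hfin : ∀ t : ℝ, c μ t ≠ ⊤ := c_ne_top p hp1 hp μ hqti hmap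
  have hsub : ∀ u t : ℝ, c μ (u + t) ≤ c μ u * c μ t := fun u t =>
    c_submul μ hqti u t (hfin u) (hfin t)
  have hest : ∀ t : ℝ, ∀ f : ℝ → ℝ, MemLp f p μ →
      eLpNorm (fun x => f (x - t)) p μ ≤ c μ t ^ (1 / p.toReal) * eLpNorm f p μ :=
    fun t f hf => norm_est μ p hp0 hp hqti t (hfin t) f hf
  set B : ℕ → Set ℝ := fun n => {t : ℝ | c μ t ≤ n ∧ c μ (-t) ≤ n} with hBdef
  have hBmeas : ∀ n, MeasurableSet (B n) := by
    intro n
    exact ((measurable_c μ) measurableSet_Iic).inter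
      (((measurable_c μ).comp measurable_neg) measurableSet_Iic)
  have hBunion : (⋃ n, B n) = Set.univ := by
    refine Set.eq_univ_of_forall fun t => ?_
    obtain ⟨n₁, hn₁⟩ := ENNReal.exists_nat_gt (hfin t)
    obtain ⟨n₂, hn₂⟩ := ENNReal.exists_nat_gt (hfin (-t))
    refine Set.mem_iUnion.2 ⟨max n₁ n₂, ?_, ?_⟩
    · exact le_trans hn₁.le (by exact_mod_cast Nat.cast_le.2 (le_max_left n₁ n₂))
    · exact le_trans hn₂.le (by exact_mod_cast Nat.cast_le.2 (le_max_right n₁ n₂))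
  have hpos : ∃ n, 0 < volume (B n) := by
    by_contra h
    push_neg at h
    have h0 : ∀ n, volume (B n) = 0 := fun n => le_antisymm (h n) zero_le
    have : volume (⋃ n, B n) = 0 :=
      le_antisymm (le_trans (measure_iUnion_le B) (by simp [h0])) zero_le
    rw [hBunion] at this
    simp [Real.volume_univ] at this
  obtain ⟨n, hn⟩ := hpos
  have hW : B n - B n ∈ nhds (0:ℝ) :=
    MeasureTheory.Measure.sub_mem_nhds_zero_of_addHaar_pos volume (B n) (hBmeas n) hn
  have hWbound : ∀ u ∈ B n - B n, c μ u ≤ (n:ℝ≥0∞) * n := by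
    rintro u hu
    obtain ⟨a, ha, b, hb, hab⟩ := Set.mem_sub.1 hu
    have : u = a + (-b) := by rw [← hab]; ring
    rw [this]
    exact le_trans (hsub a (-b)) (mul_le_mul' ha.1 hb.2)
  obtain ⟨F, hFN, hFcov⟩ := hN.elim_nhds_subcover
    (fun t => {x : ℝ | x - t ∈ B n - B n}) (fun t _ => by
      have : Continuous fun x : ℝ => x - t := continuous_sub_right t
      exact this.continuousAt.preimage_mem_nhds (by rw [sub_self]; exact hW))
  set M : ℝ≥0∞ := (F.sup fun i => c μ i) * ((n:ℝ≥0∞) * n) with hMdef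
  have hMne : M ≠ ⊤ := by
    refine ENNReal.mul_ne_top ?_
      (ENNReal.mul_ne_top (ENNReal.natCast_ne_top n) (ENNReal.natCast_ne_top n))
    refine (Finset.sup_lt_iff (by exact lt_top_iff_ne_top.2 (by simp) : (⊥:ℝ≥0∞) < ⊤)).2
      (fun i _ => lt_top_iff_ne_top.2 (hfin i)) |>.ne
  have hbound : ∀ t ∈ N, c μ t ≤ M := by
    intro t ht
    obtain ⟨i, hiF, hti⟩ := Set.mem_iUnion₂.1 (hFcov ht)
    have : t = i + (t - i) := by ring
    rw [this]
    refine le_trans (hsub i (t - i)) (mul_le_mul' (Finset.le_sup hiF) (hWbound _ hti))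
  refine ⟨M ^ (1 / p.toReal), ENNReal.rpow_ne_top_of_nonneg (by positivity) hMne, ?_⟩
  intro t ht f hf
  refine le_trans (hest t f hf) (mul_le_mul_left ?_ _)
  exact ENNReal.rpow_le_rpow (hbound t ht) (by positivity)
end

section
/- Fix 1 ≤ p < ∞. Let μ be a Radon measure on ℝ such that each translation T_t maps L^p(μ) to itself. Then the group (T_t)_{t∈ℝ} is strongly continuous on L^p(μ): for every f ∈ L^p(μ), ‖T_t f − f‖_p → 0 as t → 0. -/
open MeasureTheory ENNReal NNReal Filter Set Pointwise

namespace Stmt7Aux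

/-- Dyadic cell of generation `m` with index `k`. -/
def cell (k : ℤ) (m : ℕ) : Set ℝ := Set.Ico ((k : ℝ) * (2:ℝ)⁻¹ ^ m) (((k : ℝ) + 1) * (2:ℝ)⁻¹ ^ m)

lemma cell_measurable (k : ℤ) (m : ℕ) : MeasurableSet (cell k m) := measurableSet_Ico

lemma cell_disjoint {k l : ℤ} (h : k ≠ l) (m : ℕ) : Disjoint (cell k m) (cell l m) := by
  have h2 : (0:ℝ) < (2:ℝ)⁻¹ ^ m := by positivity
  rcases lt_or_gt_of_ne h with hkl | hkl
  · have : (k:ℝ) + 1 ≤ l := by exact_mod_cast hkl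
    rw [cell, cell, Set.Ico_disjoint_Ico]
    refine le_trans (min_le_left _ _) (le_trans ?_ (le_max_right _ _))
    nlinarith
  · have : (l:ℝ) + 1 ≤ k := by exact_mod_cast hkl
    rw [cell, cell, Set.Ico_disjoint_Ico]
    refine le_trans (min_le_right _ _) (le_trans ?_ (le_max_left _ _))
    nlinarith

/-- A cell splits into two subcells of the next generation. -/
lemma cell_split (k : ℤ) (m : ℕ) :
    cell k m = cell (2 * k) (m + 1) ∪ cell (2 * k + 1) (m + 1) := by
  have h2 : (0:ℝ) < (2:ℝ)⁻¹ ^ m := by positivity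
  unfold cell
  have e1 : ((2 * k : ℤ):ℝ) * (2:ℝ)⁻¹ ^ (m+1) = (k:ℝ) * (2:ℝ)⁻¹ ^ m := by
    push_cast [pow_succ]; ring
  have e2 : (((2 * k : ℤ):ℝ) + 1) * (2:ℝ)⁻¹ ^ (m+1) = ((2*k+1 : ℤ):ℝ) * (2:ℝ)⁻¹ ^ (m+1) := by
    push_cast; ring
  have e3 : (((2 * k + 1: ℤ):ℝ) + 1) * (2:ℝ)⁻¹ ^ (m+1) = ((k:ℝ) + 1) * (2:ℝ)⁻¹ ^ m := by
    push_cast [pow_succ]; ring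
  rw [e1, e2, e3, Set.Ico_union_Ico_eq_Ico]
  · push_cast [pow_succ]; nlinarith
  · push_cast [pow_succ]; nlinarith

lemma cell_subset_Icc (k : ℤ) (m : ℕ) :
    cell k m ⊆ Set.Icc ((k : ℝ) * (2:ℝ)⁻¹ ^ m) (((k : ℝ) + 1) * (2:ℝ)⁻¹ ^ m) :=
  Set.Ico_subset_Icc_self

/-- If `ν` is dominated by `μ'` on all dyadic cells, it is dominated on all open sets. -/
lemma isOpen_le (ν μ' : Measure ℝ) (h : ∀ (k : ℤ) (m : ℕ), ν (cell k m) ≤ μ' (cell k m))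
    {U : Set ℝ} (hU : IsOpen U) : ν U ≤ μ' U := by
  set S : ℕ → Set ℤ := fun m =>
    {k : ℤ | Set.Icc ((k : ℝ) * (2:ℝ)⁻¹ ^ m) (((k : ℝ) + 1) * (2:ℝ)⁻¹ ^ m) ⊆ U} with hS
  set V : ℕ → Set ℝ := fun m => ⋃ k ∈ S m, cell k m with hV
  have hVU : ∀ m, V m ⊆ U := by
    intro m x hx
    simp only [hV, Set.mem_iUnion] at hx
    obtain ⟨k, hk, hxk⟩ := hx
    exact hk (cell_subset_Icc k m hxk)
  have hmono : Monotone V := by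
    apply monotone_nat_of_le_succ
    intro m x hx
    simp only [hV, Set.mem_iUnion] at hx ⊢
    obtain ⟨k, hk, hxk⟩ := hx
    have h2 : (0:ℝ) < (2:ℝ)⁻¹ ^ m := by positivity
    have hsub : ∀ k' : ℤ, Set.Icc ((k' : ℝ) * (2:ℝ)⁻¹ ^ (m+1)) (((k' : ℝ) + 1) * (2:ℝ)⁻¹ ^ (m+1))
        ⊆ Set.Icc ((k : ℝ) * (2:ℝ)⁻¹ ^ m) (((k : ℝ) + 1) * (2:ℝ)⁻¹ ^ m) →
        Set.Icc ((k' : ℝ) * (2:ℝ)⁻¹ ^ (m+1)) (((k' : ℝ) + 1) * (2:ℝ)⁻¹ ^ (m+1)) ⊆ U :=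
      fun k' hs => hs.trans hk
    rw [cell_split k m] at hxk
    rcases hxk with hxk | hxk
    · refine ⟨2 * k, ?_, hxk⟩
      refine hsub _ (Set.Icc_subset_Icc ?_ ?_) <;> push_cast [pow_succ] <;> nlinarith
    · refine ⟨2 * k + 1, ?_, hxk⟩
      refine hsub _ (Set.Icc_subset_Icc ?_ ?_) <;> push_cast [pow_succ] <;> nlinarith
  have hUnion : ⋃ m, V m = U := by
    apply Set.Subset.antisymm
    · exact Set.iUnion_subset hVU
    · intro x hx
      obtain ⟨ε, hε, hball⟩ := Metric.isOpen_iff.1 hU x hx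
      obtain ⟨m, hm⟩ := exists_pow_lt_of_lt_one (half_pos hε) (by norm_num : (2:ℝ)⁻¹ < 1)
      have h2 : (0:ℝ) < (2:ℝ)⁻¹ ^ m := by positivity
      set δ := (2:ℝ)⁻¹ ^ m with hδ
      set k := ⌊x / δ⌋ with hk
      have hx1 : (k:ℝ) * δ ≤ x := by
        rw [hk, ← le_div_iff₀ h2]; exact Int.floor_le _
      have hx2 : x < ((k:ℝ) + 1) * δ := by
        rw [hk, ← div_lt_iff₀ h2]; exact Int.lt_floor_add_one _
      simp only [Set.mem_iUnion]
      refine ⟨m, Set.mem_iUnion.2 ⟨k, Set.mem_iUnion.2 ⟨?_, ⟨hx1, hx2⟩⟩⟩⟩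
      intro y hy
      apply hball
      rw [Metric.mem_ball, Real.dist_eq, abs_lt]
      have h1 : (k:ℝ) * δ ≤ y := hy.1
      have h2' : y ≤ ((k:ℝ) + 1) * δ := hy.2
      constructor <;> nlinarith
  have hVle : ∀ m, ν (V m) ≤ μ' U := by
    intro m
    have hcnt : (S m).Countable := Set.to_countable _
    have hdisj : (S m).PairwiseDisjoint (fun k => cell k m) := by
      intro a _ b _ hab
      exact cell_disjoint hab m
    have hmeas : ∀ k ∈ S m, MeasurableSet (cell k m) := fun k _ => cell_measurable k m
    calc ν (V m) = ∑' k : S m, ν (cell k m) := measure_biUnion hcnt hdisj hmeas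
      _ ≤ ∑' k : S m, μ' (cell k m) := ENNReal.tsum_le_tsum fun k => h k m
      _ = μ' (V m) := (measure_biUnion hcnt hdisj hmeas).symm
      _ ≤ μ' U := measure_mono (hVU m)
  calc ν U = ν (⋃ m, V m) := by rw [hUnion]
    _ = ⨆ m, ν (V m) := hmono.directed_le.measure_iUnion
    _ ≤ μ' U := iSup_le hVle

/-- If `ν` is dominated by an outer regular `μ'` on all dyadic cells, then `ν ≤ μ'`. -/
lemma le_of_cell_le (ν μ' : Measure ℝ) [μ'.OuterRegular]
    (h : ∀ (k : ℤ) (m : ℕ), ν (cell k m) ≤ μ' (cell k m)) : ν ≤ μ' := by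
  rw [Measure.le_iff']
  intro s
  rw [Set.measure_eq_iInf_isOpen s μ']
  simp only [le_iInf_iff]
  intro U hsU hUopen
  exact (measure_mono hsU).trans (isOpen_le ν μ' h hUopen)

/-- The translate of `μ` by `t`. -/
noncomputable def tmeas (μ : Measure ℝ) (t : ℝ) : Measure ℝ := Measure.map (fun x => x - t) μ

lemma tmeas_apply (μ : Measure ℝ) (t : ℝ) {E : Set ℝ} (hE : MeasurableSet E) :
    tmeas μ t E = μ ((fun x => x - t) ⁻¹' E) :=
  Measure.map_apply (measurable_sub_const t) hE

lemma tmeas_fmoc (μ : Measure ℝ) [IsFiniteMeasureOnCompacts μ] (t : ℝ) :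
    IsFiniteMeasureOnCompacts (tmeas μ t) := by
  constructor
  intro K hK
  rw [tmeas_apply μ t hK.measurableSet]
  have : (fun x => x - t) ⁻¹' K = (fun y => y + t) '' K := by
    ext x
    constructor
    · intro hx; exact ⟨x - t, hx, by ring⟩
    · rintro ⟨y, hy, rfl⟩; simpa using hy
  rw [this]
  exact (hK.image (continuous_add_right t)).measure_lt_top

lemma lintegral_tmeas (μ : Measure ℝ) (t : ℝ) {F : ℝ → ℝ≥0∞} (hF : Measurable F) :
    ∫⁻ x, F x ∂(tmeas μ t) = ∫⁻ x, F (x - t) ∂μ :=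
  lintegral_map hF (measurable_sub_const t)

lemma meas_tmeas_Ico (μ : Measure ℝ) [IsFiniteMeasureOnCompacts μ] (a b : ℝ) :
    Measurable (fun t => tmeas μ t (Set.Ico a b)) := by
  have h1 : ∀ t, tmeas μ t (Set.Ico a b)
      = ∫⁻ x, (Set.Ico a b).indicator (fun _ => (1:ℝ≥0∞)) (x - t) ∂μ := by
    intro t
    rw [tmeas_apply μ t measurableSet_Ico,
      ← lintegral_indicator_one ((measurable_sub_const t) measurableSet_Ico)]
    refine lintegral_congr fun x => ?_
    by_cases hx : x - t ∈ Set.Ico a b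
    · rw [Set.indicator_of_mem hx]
      exact Set.indicator_of_mem (show x ∈ (fun y => y - t) ⁻¹' Set.Ico a b from hx) _
    · rw [Set.indicator_of_notMem hx]
      exact Set.indicator_of_notMem (show x ∉ (fun y => y - t) ⁻¹' Set.Ico a b from hx) _
  simp_rw [h1]
  have hm : Measurable (Function.uncurry fun (t : ℝ) (x : ℝ) =>
      (Set.Ico a b).indicator (fun _ => (1:ℝ≥0∞)) (x - t)) :=
    (measurable_const.indicator measurableSet_Ico).comp (measurable_snd.sub measurable_fst)
  exact hm.lintegral_prod_right'

section Main

variable {p : ℝ≥0∞} {μ : Measure ℝ}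

/-- Each single translate measure is dominated by a multiple of `μ`. -/
lemma exists_le_smul (hp1 : 1 ≤ p) (hp : p ≠ ⊤) [IsFiniteMeasureOnCompacts μ]
    (hqti : ∀ E : Set ℝ, MeasurableSet E → ∀ t : ℝ, (μ E = 0 ↔ μ ((· - t) ⁻¹' E) = 0))
    (hmap : ∀ t : ℝ, ∀ f : ℝ → ℝ, MemLp f p μ → MemLp (fun x => f (x - t)) p μ)
    (t : ℝ) : ∃ n : ℕ, tmeas μ t ≤ (n : ℝ≥0∞) • μ := by
  have hp0 : p ≠ 0 := (zero_lt_one.trans_le hp1).ne'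
  have prpos : 0 < p.toReal := ENNReal.toReal_pos hp0 hp
  haveI := tmeas_fmoc μ t
  have hac : tmeas μ t ≪ μ := by
    refine Measure.AbsolutelyContinuous.mk fun E hE h0 => ?_
    rw [tmeas_apply μ t hE]
    exact (hqti E hE t).1 h0
  set ν := tmeas μ t with hν
  set w := ν.rnDeriv μ with hwdef
  have hwmeas : Measurable w := Measure.measurable_rnDeriv ν μ
  have hw : μ.withDensity w = ν := Measure.withDensity_rnDeriv_eq ν μ hac
  suffices hsuf : ∃ n : ℕ, ∀ᵐ x ∂μ, w x ≤ n by
    obtain ⟨n, hn⟩ := hsuf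
    refine ⟨n, ?_⟩
    calc ν = μ.withDensity w := hw.symm
      _ ≤ μ.withDensity (fun _ => (n : ℝ≥0∞)) := withDensity_mono hn
      _ = (n : ℝ≥0∞) • μ := by rw [withDensity_const]
  by_contra hcon
  push_neg at hcon
  -- find sets where `w` is large
  have hbig : ∀ k : ℕ, ∃ T : Set ℝ, MeasurableSet T ∧ T ⊆ {x | ((4:ℝ≥0∞)) ^ k < w x} ∧
      0 < μ T ∧ μ T < ⊤ := by
    intro k
    have h1 := hcon (4 ^ k)
    have h2 : μ {x | ¬ w x ≤ ((4 ^ k : ℕ) : ℝ≥0∞)} ≠ 0 := by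
      intro hz
      exact h1 (ae_iff.2 (by simpa only [not_not, not_le] using hz))
    have hset : {x | ¬ w x ≤ ((4 ^ k : ℕ) : ℝ≥0∞)} = {x | ((4:ℝ≥0∞)) ^ k < w x} := by
      ext x
      simp only [Set.mem_setOf_eq, not_le]
      push_cast
      rfl
    rw [hset] at h2
    have hmeas : MeasurableSet {x | ((4:ℝ≥0∞)) ^ k < w x} :=
      measurableSet_lt measurable_const hwmeas
    obtain ⟨T, hTm, hTs, hT0, hTfin⟩ :=
      Measure.exists_subset_measure_lt_top hmeas (pos_iff_ne_zero.2 h2)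
    exact ⟨T, hTm, hTs, hT0, hTfin⟩
  choose T hTm hTs hT0 hTfin using hbig
  set c : ℕ → ℝ≥0∞ := fun k => (2:ℝ≥0∞)⁻¹ ^ k * (μ (T k))⁻¹ with hc
  set g : ℝ → ℝ≥0∞ := fun x => ∑' k : ℕ, (T k).indicator (fun _ => c k) x with hg
  have hgmeas : Measurable g :=
    Measurable.ennreal_tsum fun k => measurable_const.indicator (hTm k)
  have hterm : ∀ k, ∫⁻ x, (T k).indicator (fun _ => c k) x ∂μ = (2:ℝ≥0∞)⁻¹ ^ k := by
    intro k
    rw [lintegral_indicator (hTm k), setLIntegral_const, hc, mul_assoc,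
      ENNReal.inv_mul_cancel (hT0 k).ne' (hTfin k).ne, mul_one]
  have hgint : ∫⁻ x, g x ∂μ = 2 := by
    rw [hg]
    rw [lintegral_tsum fun k => (measurable_const.indicator (hTm k)).aemeasurable]
    simp_rw [hterm]
    rw [ENNReal.tsum_geometric, ENNReal.one_sub_inv_two]
    simp
  have hgfin : ∀ᵐ x ∂μ, g x < ⊤ := ae_lt_top hgmeas (by rw [hgint]; exact ofNat_ne_top)
  have h24 : (2:ℝ≥0∞)⁻¹ * 4 = 2 := by
    rw [show (4:ℝ≥0∞) = 2 * 2 by norm_num, ← mul_assoc,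
      ENNReal.inv_mul_cancel (by norm_num) (by norm_num), one_mul]
  have hgnu : ∫⁻ x, g x ∂ν = ⊤ := by
    have hge : ∀ n : ℕ, (2:ℝ≥0∞) ^ n ≤ ∫⁻ x, g x ∂ν := by
      intro k
      have step1 : c k * ν (T k) ≤ ∫⁻ x, g x ∂ν := by
        rw [← setLIntegral_const (T k) (c k), ← lintegral_indicator (hTm k)]
        refine lintegral_mono fun x => ?_
        by_cases hx : x ∈ T k
        · calc (T k).indicator (fun _ => c k) x = c k := Set.indicator_of_mem hx _
            _ ≤ g x := by
              rw [hg]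
              have h5 := ENNReal.le_tsum (f := fun j => (T j).indicator (fun _ => c j) x) k
              simpa [Set.indicator_of_mem hx] using h5
        · simp [Set.indicator_of_notMem hx]
      have step2 : (4:ℝ≥0∞) ^ k * μ (T k) ≤ ν (T k) := by
        rw [← hw, withDensity_apply w (hTm k)]
        calc (4:ℝ≥0∞) ^ k * μ (T k) = ∫⁻ _ in T k, (4:ℝ≥0∞) ^ k ∂μ :=
              (setLIntegral_const _ _).symm
          _ ≤ ∫⁻ x in T k, w x ∂μ :=
              setLIntegral_mono hwmeas fun x hx => (hTs k hx).le
      calc (2:ℝ≥0∞) ^ k = (2:ℝ≥0∞)⁻¹ ^ k * (4:ℝ≥0∞) ^ k := by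
            rw [← mul_pow, h24]
        _ = c k * ((4:ℝ≥0∞) ^ k * μ (T k)) := by
            have hmu : (μ (T k))⁻¹ * ((4:ℝ≥0∞) ^ k * μ (T k)) = (4:ℝ≥0∞) ^ k := by
              rw [mul_comm ((4:ℝ≥0∞) ^ k), ← mul_assoc,
                ENNReal.inv_mul_cancel (hT0 k).ne' (hTfin k).ne, one_mul]
            rw [hc, mul_assoc, hmu]
        _ ≤ c k * ν (T k) := mul_le_mul_right step2 _
        _ ≤ ∫⁻ x, g x ∂ν := step1
    by_contra htop
    obtain ⟨n, hn⟩ := ENNReal.exists_nat_gt htop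
    have h2n : (n:ℝ≥0∞) ≤ (2:ℝ≥0∞) ^ n := by
      calc (n:ℝ≥0∞) ≤ ((2 ^ n : ℕ) : ℝ≥0∞) := by
            exact_mod_cast Nat.le_of_lt (Nat.lt_two_pow_self (n := n))
        _ = (2:ℝ≥0∞) ^ n := by push_cast; rfl
    exact absurd (h2n.trans (hge n)) (not_le.2 hn)
  -- build the bad function
  set f : ℝ → ℝ := fun x => ((g x).toReal) ^ (p.toReal)⁻¹ with hf
  have hfmeas : Measurable f :=
    (Real.continuous_rpow_const (inv_nonneg.2 prpos.le)).measurable.comp hgmeas.ennreal_toReal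
  have hkey : ∀ x, ((‖f x‖₊ : ℝ≥0∞)) ^ p.toReal = ENNReal.ofReal ((g x).toReal) := by
    intro x
    have hfx : 0 ≤ f x := Real.rpow_nonneg ENNReal.toReal_nonneg _
    rw [show ((‖f x‖₊ : ℝ≥0∞)) = ‖f x‖ₑ from rfl, Real.enorm_eq_ofReal hfx, ENNReal.ofReal_rpow_of_nonneg hfx prpos.le]
    congr 1
    show ((g x).toReal ^ p.toReal⁻¹) ^ p.toReal = (g x).toReal
    rw [← Real.rpow_mul ENNReal.toReal_nonneg, inv_mul_cancel₀ prpos.ne', Real.rpow_one]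
  have hfint : ∫⁻ x, ((‖f x‖₊ : ℝ≥0∞)) ^ p.toReal ∂μ = 2 := by
    simp_rw [hkey]
    rw [lintegral_congr_ae (hgfin.mono fun x hx => by rw [ENNReal.ofReal_toReal hx.ne])]
    exact hgint
  have hfmem : MemLp f p μ := by
    refine ⟨hfmeas.aestronglyMeasurable, ?_⟩
    rw [eLpNorm_eq_lintegral_rpow_enorm_toReal hp0 hp,
      show (∫⁻ x, ‖f x‖ₑ ^ p.toReal ∂μ) = ∫⁻ x, ((‖f x‖₊ : ℝ≥0∞)) ^ p.toReal ∂μ from rfl, hfint]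
    exact ENNReal.rpow_lt_top_of_nonneg (by positivity) ofNat_ne_top
  have htrans := hmap t f hfmem
  have h2 : eLpNorm (fun x => f (x - t)) p μ = ⊤ := by
    rw [eLpNorm_eq_lintegral_rpow_enorm_toReal hp0 hp]
    have hFm : Measurable (fun y : ℝ => ((‖f y‖₊ : ℝ≥0∞)) ^ p.toReal) :=
      ENNReal.continuous_rpow_const.measurable.comp hfmeas.enorm
    have e1 : ∫⁻ x, ((‖f (x - t)‖₊:ℝ≥0∞)) ^ p.toReal ∂μ
        = ∫⁻ x, ((‖f x‖₊:ℝ≥0∞)) ^ p.toReal ∂ν :=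
      (lintegral_tmeas μ t hFm).symm
    have e2 : ∫⁻ x, ((‖f x‖₊:ℝ≥0∞)) ^ p.toReal ∂ν = ∫⁻ x, g x ∂ν := by
      simp_rw [hkey]
      refine lintegral_congr_ae ?_
      have hgfinν : ∀ᵐ x ∂ν, g x < ⊤ := hac.ae_le hgfin
      exact hgfinν.mono fun x hx => by
        show ENNReal.ofReal (g x).toReal = g x
        exact ENNReal.ofReal_toReal hx.ne
    rw [show (∫⁻ x, ‖f (x - t)‖ₑ ^ p.toReal ∂μ) = ∫⁻ x, ((‖f (x - t)‖₊:ℝ≥0∞)) ^ p.toReal ∂μ from rfl,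
      e1, e2, hgnu]
    exact ENNReal.top_rpow_of_pos (by positivity)
  exact absurd h2 htrans.2.ne

lemma uniform_bound (hp1 : 1 ≤ p) (hp : p ≠ ⊤) [IsFiniteMeasureOnCompacts μ]
    (hqti : ∀ E : Set ℝ, MeasurableSet E → ∀ t : ℝ, (μ E = 0 ↔ μ ((· - t) ⁻¹' E) = 0))
    (hmap : ∀ t : ℝ, ∀ f : ℝ → ℝ, MemLp f p μ → MemLp (fun x => f (x - t)) p μ) :
    ∃ M : ℝ≥0∞, M ≠ ⊤ ∧ ∃ δ : ℝ, 0 < δ ∧ ∀ t : ℝ, |t| < δ → tmeas μ t ≤ M • μ := by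
  classical
  set A : ℕ → Set ℝ := fun n => {t | ∀ (k : ℤ) (m : ℕ),
      tmeas μ t (cell k m) ≤ n * μ (cell k m) ∧ tmeas μ (-t) (cell k m) ≤ n * μ (cell k m)}
    with hA
  have hAmeas : ∀ n, MeasurableSet (A n) := by
    intro n
    have hrw : A n = ⋂ (k : ℤ), ⋂ (m : ℕ),
        ({t | tmeas μ t (cell k m) ≤ n * μ (cell k m)}
          ∩ {t | tmeas μ (-t) (cell k m) ≤ n * μ (cell k m)}) := by
      ext t
      constructor
      · intro h
        exact Set.mem_iInter.2 fun k => Set.mem_iInter.2 fun m => ⟨(h k m).1, (h k m).2⟩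
      · intro h k m
        have hkm := Set.mem_iInter.1 (Set.mem_iInter.1 h k) m
        exact ⟨hkm.1, hkm.2⟩
    rw [hrw]
    refine MeasurableSet.iInter fun k => MeasurableSet.iInter fun m =>
      MeasurableSet.inter ?_ ?_
    · exact measurableSet_le (meas_tmeas_Ico μ _ _) measurable_const
    · exact measurableSet_le ((meas_tmeas_Ico μ _ _).comp measurable_neg) measurable_const
  have hsmul_eq : ∀ n : ℕ, ((n:ℝ≥0) • μ) = ((n : ℝ≥0∞) • μ) := by
    intro n
    ext s hs
    simp [Measure.smul_apply, ENNReal.smul_def]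
  have key : ∀ (n : ℕ) (s : ℝ),
      (∀ (k : ℤ) (m : ℕ), tmeas μ s (cell k m) ≤ (n:ℝ≥0∞) * μ (cell k m)) →
      tmeas μ s ≤ (n : ℝ≥0∞) • μ := by
    intro n s hcells
    rw [← hsmul_eq n]
    refine le_of_cell_le _ _ fun k m => ?_
    rw [hsmul_eq n]
    simpa [Measure.smul_apply, smul_eq_mul] using hcells k m
  have hcover : ∀ t : ℝ, ∃ n : ℕ, t ∈ A n := by
    intro t
    obtain ⟨n₁, h₁⟩ := exists_le_smul hp1 hp hqti hmap t
    obtain ⟨n₂, h₂⟩ := exists_le_smul hp1 hp hqti hmap (-t)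
    refine ⟨max n₁ n₂, fun k m => ⟨?_, ?_⟩⟩
    · calc tmeas μ t (cell k m) ≤ ((n₁:ℝ≥0∞) • μ) (cell k m) := Measure.le_iff'.1 h₁ _
        _ = (n₁:ℝ≥0∞) * μ (cell k m) := by simp [Measure.smul_apply, smul_eq_mul]
        _ ≤ ((max n₁ n₂ : ℕ) : ℝ≥0∞) * μ (cell k m) :=
            mul_le_mul_left (by exact_mod_cast le_max_left n₁ n₂) _
    · calc tmeas μ (-t) (cell k m) ≤ ((n₂:ℝ≥0∞) • μ) (cell k m) := Measure.le_iff'.1 h₂ _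
        _ = (n₂:ℝ≥0∞) * μ (cell k m) := by simp [Measure.smul_apply, smul_eq_mul]
        _ ≤ ((max n₁ n₂ : ℕ) : ℝ≥0∞) * μ (cell k m) :=
            mul_le_mul_left (by exact_mod_cast le_max_right n₁ n₂) _
  obtain ⟨n, hn⟩ : ∃ n : ℕ, volume (A n ∩ Set.Icc (0:ℝ) 1) ≠ 0 := by
    by_contra hall
    push_neg at hall
    have hsub : Set.Icc (0:ℝ) 1 ⊆ ⋃ n, (A n ∩ Set.Icc (0:ℝ) 1) := by
      intro t ht
      obtain ⟨n, hnmem⟩ := hcover t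
      exact Set.mem_iUnion.2 ⟨n, hnmem, ht⟩
    have hnull : volume (⋃ n, (A n ∩ Set.Icc (0:ℝ) 1)) = 0 := measure_iUnion_null hall
    have hzero := measure_mono_null hsub hnull
    simp [Real.volume_Icc] at hzero
  set E := A n ∩ Set.Icc (0:ℝ) 1 with hE
  have hEmeas : MeasurableSet E := (hAmeas n).inter measurableSet_Icc
  have hEE := MeasureTheory.Measure.sub_mem_nhds_zero_of_addHaar_pos volume E hEmeas (pos_iff_ne_zero.2 hn)
  obtain ⟨δ, hδ, hball⟩ := Metric.mem_nhds_iff.1 hEE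
  refine ⟨(n:ℝ≥0∞) * n, ENNReal.mul_ne_top (natCast_ne_top n) (natCast_ne_top n), δ, hδ, ?_⟩
  intro t ht
  have htE : t ∈ E - E := hball (by simpa [Real.norm_eq_abs, mem_ball_zero_iff] using ht)
  obtain ⟨a, ha, b, hb, hab⟩ := Set.mem_sub.1 htE
  have h1 : tmeas μ (-b) ≤ (n:ℝ≥0∞) • μ := key n (-b) (fun k m => (hb.1 k m).2)
  have h2 : tmeas μ a ≤ (n:ℝ≥0∞) • μ := key n a (fun k m => (ha.1 k m).1)
  calc tmeas μ t = Measure.map (fun x => x - a) (tmeas μ (-b)) := by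
        rw [tmeas, tmeas, Measure.map_map (measurable_sub_const a) (measurable_sub_const (-b))]
        have : ((fun x => x - a) ∘ fun x => x - (-b)) = fun x : ℝ => x - t := by
          funext x
          simp only [Function.comp_apply]
          rw [← hab]; ring
        rw [this]
    _ ≤ Measure.map (fun x => x - a) ((n:ℝ≥0∞) • μ) :=
        Measure.map_mono h1 (measurable_sub_const a)
    _ = (n:ℝ≥0∞) • tmeas μ a := by rw [Measure.map_smul]; rfl
    _ ≤ (n:ℝ≥0∞) • ((n:ℝ≥0∞) • μ) := by
        rw [Measure.le_iff']
        intro s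
        simp only [Measure.smul_apply, smul_eq_mul]
        exact mul_le_mul_right (Measure.le_iff'.1 h2 s) _
    _ = ((n:ℝ≥0∞) * n) • μ := smul_smul _ _ _

lemma ae_translate [IsFiniteMeasureOnCompacts μ]
    (hqti : ∀ E : Set ℝ, MeasurableSet E → ∀ t : ℝ, (μ E = 0 ↔ μ ((· - t) ⁻¹' E) = 0))
    {t : ℝ} {h₁ h₂ : ℝ → ℝ} (h : h₁ =ᵐ[μ] h₂) :
    (fun x => h₁ (x - t)) =ᵐ[μ] (fun x => h₂ (x - t)) := by
  have hnull : μ (toMeasurable μ {x | h₁ x ≠ h₂ x}) = 0 := by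
    rw [measure_toMeasurable]
    exact ae_iff.1 h
  have hnull' : μ ((· - t) ⁻¹' toMeasurable μ {x | h₁ x ≠ h₂ x}) = 0 :=
    (hqti _ (measurableSet_toMeasurable μ _) t).1 hnull
  refine ae_iff.2 (measure_mono_null ?_ hnull')
  intro x hx
  exact subset_toMeasurable μ _ hx

end Main

end Stmt7Aux

/-- If the translations act on L^p(μ), 1 ≤ p < ∞, they form a strongly continuous group:
‖T_t f - f‖_p → 0 as t → 0. -/
theorem stmt7 (p : ℝ≥0∞) (hp1 : 1 ≤ p) (hp : p ≠ ⊤)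
    (μ : Measure ℝ) [IsFiniteMeasureOnCompacts μ]
    (hqti : ∀ E : Set ℝ, MeasurableSet E → ∀ t : ℝ, (μ E = 0 ↔ μ ((· - t) ⁻¹' E) = 0))
    (hmap : ∀ t : ℝ, ∀ f : ℝ → ℝ, MemLp f p μ → MemLp (fun x => f (x - t)) p μ) :
    ∀ f : ℝ → ℝ, MemLp f p μ →
      Tendsto (fun t : ℝ => eLpNorm (fun x => f (x - t) - f x) p μ) (nhds 0) (nhds 0) := by
  intro f hf
  classical
  have hp0 : p ≠ 0 := (zero_lt_one.trans_le hp1).ne'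
  have prpos : 0 < p.toReal := ENNReal.toReal_pos hp0 hp
  obtain ⟨M, hMne, δ₀, hδ₀, hM⟩ := Stmt7Aux.uniform_bound hp1 hp hqti hmap
  -- measurable representative
  obtain ⟨f', hf'meas, hff'⟩ : ∃ f' : ℝ → ℝ, Measurable f' ∧ f =ᵐ[μ] f' :=
    ⟨hf.1.mk f, hf.1.measurable_mk, hf.1.ae_eq_mk⟩
  have hf' : MemLp f' p μ := hf.ae_eq hff'
  have hreduce : (fun t : ℝ => eLpNorm (fun x => f (x - t) - f x) p μ)
      = fun t => eLpNorm (fun x => f' (x - t) - f' x) p μ := by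
    funext t
    exact eLpNorm_congr_ae ((Stmt7Aux.ae_translate hqti hff').sub hff')
  rw [hreduce, ENNReal.tendsto_nhds_zero]
  intro ε hε
  set C := M ^ (1 / p.toReal) with hC
  have hCne : C ≠ ⊤ := ENNReal.rpow_ne_top_of_nonneg (by positivity) hMne
  have hC2 : C + 2 ≠ ⊤ := ENNReal.add_ne_top.2 ⟨hCne, ofNat_ne_top⟩
  set ε₁ := min 1 (ε / (C + 2)) with hε₁def
  have hε₁0 : ε₁ ≠ 0 := (lt_min one_pos (ENNReal.div_pos hε.ne' hC2)).ne'
  have hε₁top : ε₁ ≠ ⊤ := ((min_le_left _ _).trans_lt one_lt_top).ne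
  -- approximation by a continuous compactly supported function
  obtain ⟨g, g_supp, hfg, g_cont, g_mem⟩ :=
    hf'.exists_hasCompactSupport_eLpNorm_sub_le hp hε₁0
  have hfg' : eLpNorm (fun y => f' y - g y) p μ ≤ ε₁ := hfg
  set K' := Metric.cthickening 1 (tsupport g) with hK'
  have hK'meas : MeasurableSet K' := Metric.isClosed_cthickening.measurableSet
  have hK'fin : μ K' < ⊤ := (g_supp.cthickening).measure_lt_top
  set D := μ K' ^ (1 / p.toReal) + 1 with hD
  have hD0 : D ≠ 0 := by
    intro h0
    rw [hD] at h0
    simp [add_eq_zero] at h0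
  have hDne : D ≠ ⊤ := by
    rw [hD]
    exact ENNReal.add_ne_top.2
      ⟨ENNReal.rpow_ne_top_of_nonneg (by positivity) hK'fin.ne, one_ne_top⟩
  set η := (ε₁ / D).toReal with hη
  have hηpos : 0 < η :=
    ENNReal.toReal_pos (ENNReal.div_pos hε₁0 hDne).ne' (ENNReal.div_lt_top hε₁top hD0).ne
  obtain ⟨δ₁, hδ₁, hucont⟩ := Metric.uniformContinuous_iff.1
    (g_supp.uniformContinuous_of_continuous g_cont) η hηpos
  set δ := min δ₀ (min δ₁ 1) with hδdef
  have hδpos : 0 < δ := lt_min hδ₀ (lt_min hδ₁ one_pos)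
  filter_upwards [Metric.ball_mem_nhds (0:ℝ) hδpos] with t ht
  rw [mem_ball_zero_iff, Real.norm_eq_abs] at ht
  have ht0 : |t| < δ₀ := ht.trans_le (min_le_left _ _)
  have ht1 : |t| < δ₁ := ht.trans_le ((min_le_right _ _).trans (min_le_left _ _))
  have ht2 : |t| ≤ 1 := (ht.trans_le ((min_le_right _ _).trans (min_le_right _ _))).le
  have hνle : Stmt7Aux.tmeas μ t ≤ M • μ := hM t ht0
  -- memberships
  have hfg_mem : MemLp (fun x => f' x - g x) p μ := hf'.sub g_mem
  have h1mem : MemLp (fun x => f' (x - t) - g (x - t)) p μ := hmap t (fun x => f' x - g x) hfg_mem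
  have h2mem : MemLp (fun x => g (x - t) - g x) p μ := (hmap t g g_mem).sub g_mem
  have h3mem : MemLp (fun x => g x - f' x) p μ := g_mem.sub hf'
  -- first term
  have hmeas' : Measurable (fun x => f' x - g x) := hf'meas.sub g_cont.measurable
  have hT1 : eLpNorm (fun x => f' (x - t) - g (x - t)) p μ ≤ C * ε₁ := by
    have hmeasF : Measurable (fun y => ((‖f' y - g y‖₊ : ℝ≥0∞)) ^ p.toReal) :=
      ENNReal.continuous_rpow_const.measurable.comp hmeas'.enorm
    calc eLpNorm (fun x => f' (x - t) - g (x - t)) p μ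
        = (∫⁻ x, ((‖f' (x - t) - g (x - t)‖₊ : ℝ≥0∞)) ^ p.toReal ∂μ) ^ (1 / p.toReal) :=
          eLpNorm_eq_lintegral_rpow_enorm_toReal hp0 hp
      _ = (∫⁻ y, ((‖f' y - g y‖₊ : ℝ≥0∞)) ^ p.toReal ∂(Stmt7Aux.tmeas μ t)) ^ (1 / p.toReal) := by
          rw [Stmt7Aux.lintegral_tmeas μ t hmeasF]
      _ ≤ (∫⁻ y, ((‖f' y - g y‖₊ : ℝ≥0∞)) ^ p.toReal ∂(M • μ)) ^ (1 / p.toReal) :=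
          ENNReal.rpow_le_rpow (lintegral_mono' hνle le_rfl) (by positivity)
      _ = (M * ∫⁻ y, ((‖f' y - g y‖₊ : ℝ≥0∞)) ^ p.toReal ∂μ) ^ (1 / p.toReal) := by
          rw [lintegral_smul_measure, smul_eq_mul]
      _ = C * (∫⁻ y, ((‖f' y - g y‖₊ : ℝ≥0∞)) ^ p.toReal ∂μ) ^ (1 / p.toReal) := by
          rw [ENNReal.mul_rpow_of_nonneg _ _ (by positivity)]
      _ = C * eLpNorm (fun y => f' y - g y) p μ := by
          rw [eLpNorm_eq_lintegral_rpow_enorm_toReal hp0 hp]; rfl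
      _ ≤ C * ε₁ := mul_le_mul_right hfg' _
  -- second term
  have hT2 : eLpNorm (fun x => g (x - t) - g x) p μ ≤ ε₁ := by
    have hpt : ∀ x, ‖g (x - t) - g x‖ ≤ ‖K'.indicator (fun _ => η) x‖ := by
      intro x
      by_cases hx : x ∈ K'
      · rw [Set.indicator_of_mem hx]
        have hd : dist (g (x - t)) (g x) < η := by
          apply hucont
          rw [Real.dist_eq]
          simpa using ht1
        rw [Real.norm_eq_abs, Real.norm_eq_abs, abs_of_pos hηpos]
        calc |g (x - t) - g x| = dist (g (x - t)) (g x) := (Real.dist_eq _ _).symm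
          _ ≤ η := hd.le
      · have hx1 : g x = 0 := by
          apply image_eq_zero_of_notMem_tsupport
          intro hmem
          exact hx (Metric.self_subset_cthickening _ hmem)
        have hx2 : g (x - t) = 0 := by
          apply image_eq_zero_of_notMem_tsupport
          intro hmem
          refine hx (Metric.mem_cthickening_of_dist_le x (x - t) 1 _ hmem ?_)
          rw [Real.dist_eq]
          simpa using ht2
        simp [hx1, hx2, Set.indicator_of_notMem hx]
    calc eLpNorm (fun x => g (x - t) - g x) p μ
        ≤ eLpNorm (K'.indicator fun _ => η) p μ := eLpNorm_mono hpt
      _ = ‖η‖₊ * μ K' ^ (1 / p.toReal) := eLpNorm_indicator_const hK'meas hp0 hp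
      _ ≤ (ε₁ / D) * D := by
          refine mul_le_mul ?_ ?_ (by simp) (by simp)
          · refine le_of_eq ?_
            rw [show ((‖η‖₊ : ℝ≥0∞)) = ‖η‖ₑ from rfl, Real.enorm_eq_ofReal hηpos.le, hη,
              ENNReal.ofReal_toReal (ENNReal.div_lt_top hε₁top hD0).ne]
          · rw [hD]; exact le_self_add
      _ = ε₁ := ENNReal.div_mul_cancel hD0 hDne
  -- third term
  have hT3 : eLpNorm (fun x => g x - f' x) p μ ≤ ε₁ := by
    have hneg : (fun x => g x - f' x) = -(fun x => f' x - g x) := by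
      funext x; simp [neg_sub]
    rw [hneg, eLpNorm_neg]
    exact hfg'
  -- triangle inequality
  have hdecomp : (fun x => f' (x - t) - f' x)
      = (fun x => f' (x - t) - g (x - t))
        + ((fun x => g (x - t) - g x) + (fun x => g x - f' x)) := by
    funext x
    simp only [Pi.add_apply]
    ring
  calc eLpNorm (fun x => f' (x - t) - f' x) p μ
      = eLpNorm ((fun x => f' (x - t) - g (x - t))
          + ((fun x => g (x - t) - g x) + (fun x => g x - f' x))) p μ := by rw [hdecomp]
    _ ≤ eLpNorm (fun x => f' (x - t) - g (x - t)) p μ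
        + eLpNorm ((fun x => g (x - t) - g x) + (fun x => g x - f' x)) p μ :=
        eLpNorm_add_le h1mem.1 (h2mem.1.add h3mem.1) hp1
    _ ≤ eLpNorm (fun x => f' (x - t) - g (x - t)) p μ
        + (eLpNorm (fun x => g (x - t) - g x) p μ + eLpNorm (fun x => g x - f' x) p μ) :=
        add_le_add_right (eLpNorm_add_le h2mem.1 h3mem.1 hp1) _
    _ ≤ C * ε₁ + (ε₁ + ε₁) := add_le_add hT1 (add_le_add hT2 hT3)
    _ = (C + 2) * ε₁ := by ring
    _ ≤ (C + 2) * (ε / (C + 2)) := mul_le_mul_right (min_le_right _ _) _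
    _ ≤ ε := ENNReal.mul_div_le
end

section
/- Let μ be a nonzero Radon measure on ℝ that is quasi-translation invariant. Then there exists a bounded Borel function f (one may take f = χ_{[a,∞)}) and a bounded linear functional ρ on L^∞(μ) with ‖ρ‖ = 1 such that ρ(f) = 1 while ρ(T_t f) = 0 for all t > 0; hence translation is not weakly continuous on L^∞(μ). -/
open MeasureTheory Filter Topology

/-- Translation is not weakly continuous on L^∞(μ): there is a norm-one functional ρ and
f = χ_{[a,∞)} with ρ(f) = 1 but ρ(T_t f) = 0 for all t > 0. -/
theorem stmt9 (μ : Measure ℝ) [IsFiniteMeasureOnCompacts μ]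
    (hqti : ∀ E : Set ℝ, MeasurableSet E → ∀ t : ℝ, (μ E = 0 ↔ μ ((· - t) ⁻¹' E) = 0))
    (hne : μ ≠ 0) :
    ∃ (a : ℝ) (ρ : Lp ℝ ⊤ μ →L[ℝ] ℝ), ‖ρ‖ = 1 ∧
      ∀ (hf : MemLp (Set.indicator (Set.Ici a) fun _ => (1:ℝ)) ⊤ μ)
        (hft : ∀ t : ℝ, MemLp (fun x => Set.indicator (Set.Ici a) (fun _ => (1:ℝ)) (x - t)) ⊤ μ),
        ρ (hf.toLp _) = 1 ∧ ∀ t : ℝ, 0 < t → ρ ((hft t).toLp _) = 0 := by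
  classical
  -- Step 1: every interval [0, δ) has positive measure.
  have hpos : ∀ δ : ℝ, 0 < δ → μ (Set.Ico (0:ℝ) δ) ≠ 0 := by
    intro δ hδ h0
    have hall : ∀ t : ℝ, μ (Set.Ico t (t + δ)) = 0 := by
      intro t
      have h1 := (hqti (Set.Ico 0 δ) measurableSet_Ico t).mp h0
      have hset : ((· - t) ⁻¹' Set.Ico (0:ℝ) δ) = Set.Ico t (t + δ) := by
        ext x
        simp only [Set.mem_preimage, Set.mem_Ico]
        constructor <;> rintro ⟨h1, h2⟩ <;> constructor <;> linarith
      rwa [hset] at h1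
    apply hne
    rw [← Measure.measure_univ_eq_zero]
    have hcover : (Set.univ : Set ℝ) ⊆ ⋃ k : ℤ, Set.Ico ((k : ℝ) * δ) ((k : ℝ) * δ + δ) := by
      intro x _
      refine Set.mem_iUnion.2 ⟨⌊x / δ⌋, ?_, ?_⟩
      · have := Int.floor_le (x / δ)
        calc (⌊x / δ⌋ : ℝ) * δ ≤ (x / δ) * δ := by
              exact mul_le_mul_of_nonneg_right this hδ.le
          _ = x := by field_simp
      · have h2 := Int.lt_floor_add_one (x / δ)
        have : x / δ * δ < ((⌊x / δ⌋ : ℝ) + 1) * δ := mul_lt_mul_of_pos_right h2 hδ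
        have hx : x = x / δ * δ := by field_simp
        nlinarith
    exact measure_mono_null hcover (measure_iUnion_null fun k => hall _)
  -- basic objects
  set E : ℕ → Set ℝ := fun n => Set.Ico (0:ℝ) (1 / (n + 1)) with hE
  have hδpos : ∀ n : ℕ, (0:ℝ) < 1 / (n + 1) := fun n => by positivity
  have hEfin : ∀ n, μ (E n) < ⊤ := fun n => measure_Ico_lt_top
  set c : ℕ → ℝ := fun n => (μ (E n)).toReal with hc
  have hEpos : ∀ n, 0 < c n := fun n =>
    ENNReal.toReal_pos (hpos _ (hδpos n)) (hEfin n).ne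
  set seq : Lp ℝ ⊤ μ → ℕ → ℝ := fun g n => (c n)⁻¹ * ∫ x in E n, g x ∂μ with hseq
  -- integrability on E n
  have hint : ∀ (g : Lp ℝ ⊤ μ) (n : ℕ), IntegrableOn (g : ℝ → ℝ) (E n) μ := by
    intro g n
    have h1 : MemLp (g : ℝ → ℝ) ⊤ (μ.restrict (E n)) := (Lp.memLp g).restrict _
    have : IsFiniteMeasure (μ.restrict (E n)) :=
      ⟨by rw [Measure.restrict_apply_univ]; exact hEfin n⟩
    exact h1.integrable le_top
  -- a.e. bound
  have hae : ∀ g : Lp ℝ ⊤ μ, ∀ᵐ x ∂μ, ‖(g : ℝ → ℝ) x‖ ≤ ‖g‖ := by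
    intro g
    have hfin : eLpNorm (g : ℝ → ℝ) ⊤ μ ≠ ⊤ := Lp.eLpNorm_ne_top g
    rw [eLpNorm_exponent_top] at hfin
    filter_upwards [ae_le_eLpNormEssSup (f := (g : ℝ → ℝ)) (μ := μ)] with x hx
    have h2 := ENNReal.toReal_mono hfin hx
    rw [Lp.norm_def, eLpNorm_exponent_top]
    simpa using h2
  -- bound on the averages
  have hbdd : ∀ (g : Lp ℝ ⊤ μ) (n : ℕ), |seq g n| ≤ ‖g‖ := by
    intro g n
    have h1 : ‖∫ x in E n, (g : ℝ → ℝ) x ∂μ‖ ≤ ‖g‖ * (μ (E n)).toReal :=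
      norm_setIntegral_le_of_norm_le_const_ae' (hEfin n)
        ((hae g).mono fun x hx _ => hx)
    rw [Real.norm_eq_abs] at h1
    have hc0 : 0 < c n := hEpos n
    rw [hseq]
    simp only [abs_mul, abs_of_pos (inv_pos.2 hc0)]
    calc (c n)⁻¹ * |∫ x in E n, (g : ℝ → ℝ) x ∂μ| ≤ (c n)⁻¹ * (‖g‖ * c n) := by
          exact mul_le_mul_of_nonneg_left h1 (inv_pos.2 hc0).le
      _ = ‖g‖ := by field_simp
  -- ultrafilter extending atTop
  obtain ⟨U, hU⟩ : ∃ U : Ultrafilter ℕ, (U : Filter ℕ) ≤ atTop :=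
    ⟨Ultrafilter.of atTop, Ultrafilter.of_le _⟩
  -- limits exist along U
  have hexists : ∀ g : Lp ℝ ⊤ μ, ∃ l : ℝ, Tendsto (seq g) (U : Filter ℕ) (𝓝 l) := by
    intro g
    have hmem : ∀ n, seq g n ∈ Set.Icc (-‖g‖) ‖g‖ := fun n => by
      have := abs_le.mp (hbdd g n); exact ⟨this.1, this.2⟩
    obtain ⟨l, -, hl⟩ := (isCompact_Icc (a := -‖g‖) (b := ‖g‖)).ultrafilter_le_nhds
      (U.map (seq g)) (by
        rw [Ultrafilter.coe_map, le_principal_iff, Filter.mem_map]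
        exact Filter.univ_mem' hmem)
    refine ⟨l, ?_⟩
    rw [Tendsto, ← Ultrafilter.coe_map]
    exact hl
  set Lfun : Lp ℝ ⊤ μ → ℝ := fun g => limUnder (U : Filter ℕ) (seq g) with hLfun
  have htend : ∀ g, Tendsto (seq g) (U : Filter ℕ) (𝓝 (Lfun g)) := fun g =>
    tendsto_nhds_limUnder (hexists g)
  -- additivity
  have hadd : ∀ g h : Lp ℝ ⊤ μ, Lfun (g + h) = Lfun g + Lfun h := by
    intro g h
    have hpt : ∀ n, seq (g + h) n = seq g n + seq h n := by
      intro n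
      have hadd' : (((g + h : Lp ℝ ⊤ μ) : ℝ → ℝ))
          =ᵐ[μ.restrict (E n)] fun x => (g : ℝ → ℝ) x + (h : ℝ → ℝ) x := by
        filter_upwards [ae_restrict_of_ae (Lp.coeFn_add g h)] with x hx using hx
      rw [hseq]
      simp only
      rw [integral_congr_ae hadd', integral_add (hint g n) (hint h n)]
      ring
    have h2 : Tendsto (seq (g + h)) (U : Filter ℕ) (𝓝 (Lfun g + Lfun h)) := by
      rw [show seq (g + h) = fun n => seq g n + seq h n from funext hpt]
      exact (htend g).add (htend h)
    exact tendsto_nhds_unique (htend (g + h)) h2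
  have hsmul : ∀ (r : ℝ) (g : Lp ℝ ⊤ μ), Lfun (r • g) = r * Lfun g := by
    intro r g
    have hpt : ∀ n, seq (r • g) n = r * seq g n := by
      intro n
      have hsm : (((r • g : Lp ℝ ⊤ μ) : ℝ → ℝ))
          =ᵐ[μ.restrict (E n)] fun x => r • (g : ℝ → ℝ) x := by
        filter_upwards [ae_restrict_of_ae (Lp.coeFn_smul r g)] with x hx using hx
      rw [hseq]
      simp only
      rw [integral_congr_ae hsm, integral_smul]
      simp [smul_eq_mul]; ring
    have h2 : Tendsto (seq (r • g)) (U : Filter ℕ) (𝓝 (r * Lfun g)) := by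
      rw [show seq (r • g) = fun n => r * seq g n from funext hpt]
      exact (htend g).const_mul r
    exact tendsto_nhds_unique (htend (r • g)) h2
  set L : Lp ℝ ⊤ μ →ₗ[ℝ] ℝ :=
    { toFun := Lfun
      map_add' := hadd
      map_smul' := hsmul } with hL
  have hLbound : ∀ g : Lp ℝ ⊤ μ, ‖L g‖ ≤ 1 * ‖g‖ := by
    intro g
    rw [one_mul, Real.norm_eq_abs, abs_le]
    constructor
    · exact ge_of_tendsto (htend g) (Eventually.of_forall fun n => (abs_le.mp (hbdd g n)).1)
    · exact le_of_tendsto (htend g) (Eventually.of_forall fun n => (abs_le.mp (hbdd g n)).2)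
  set ρ : Lp ℝ ⊤ μ →L[ℝ] ℝ := LinearMap.mkContinuous L 1 hLbound with hρ
  have hρapp : ∀ g : Lp ℝ ⊤ μ, ρ g = Lfun g := fun g => rfl
  -- value on indicator functions
  have hval : ∀ (S : Set ℝ) (hS : MeasurableSet S)
      (f0 : ℝ → ℝ) (hf0 : f0 = S.indicator fun _ => (1:ℝ))
      (h : MemLp f0 ⊤ μ) (n : ℕ),
      seq (h.toLp _) n = (c n)⁻¹ * (μ (E n ∩ S)).toReal := by
    intro S hS f0 hf0 h n
    subst hf0
    have h1 : (((h.toLp _ : Lp ℝ ⊤ μ)) : ℝ → ℝ)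
        =ᵐ[μ.restrict (E n)] S.indicator fun _ => (1:ℝ) :=
      ae_restrict_of_ae h.coeFn_toLp
    rw [hseq]
    simp only
    rw [integral_congr_ae h1, setIntegral_indicator hS, setIntegral_const]
    simp [Measure.real]
  -- value 1 on χ_{[0,∞)}
  have hval1 : ∀ h : MemLp ((Set.Ici (0:ℝ)).indicator fun _ => (1:ℝ)) ⊤ μ,
      Lfun (h.toLp _) = 1 := by
    intro h
    have hpt : ∀ n, seq (h.toLp _) n = 1 := by
      intro n
      rw [hval (Set.Ici 0) measurableSet_Ici _ rfl h n]
      have hsub : E n ∩ Set.Ici (0:ℝ) = E n :=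
        Set.inter_eq_left.2 fun x hx => hx.1
      rw [hsub]
      exact inv_mul_cancel₀ (hEpos n).ne'
    have h2 : Tendsto (seq (h.toLp _)) (U : Filter ℕ) (𝓝 1) := by
      rw [show seq (h.toLp _) = fun _ => (1:ℝ) from funext hpt]
      exact tendsto_const_nhds
    exact tendsto_nhds_unique (htend _) h2
  -- value 0 on translates
  have hval2 : ∀ (t : ℝ), 0 < t →
      ∀ h : MemLp (fun x => (Set.Ici (0:ℝ)).indicator (fun _ => (1:ℝ)) (x - t)) ⊤ μ,
      Lfun (h.toLp _) = 0 := by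
    intro t ht h
    have hfeq : (fun x => (Set.Ici (0:ℝ)).indicator (fun _ => (1:ℝ)) (x - t))
        = (Set.Ici t).indicator fun _ => (1:ℝ) := by
      funext x
      by_cases hx : t ≤ x
      · simp [Set.indicator_apply, Set.mem_Ici, sub_nonneg, hx]
      · simp [Set.indicator_apply, Set.mem_Ici, sub_nonneg, hx]
    have hpt : ∀ n, seq (h.toLp _) n = (c n)⁻¹ * (μ (E n ∩ Set.Ici t)).toReal :=
      hval (Set.Ici t) measurableSet_Ici _ hfeq h
    obtain ⟨N, hN⟩ := exists_nat_gt (1 / t)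
    have hev : ∀ᶠ n in (atTop : Filter ℕ), seq (h.toLp _) n = 0 := by
      filter_upwards [eventually_ge_atTop N] with n hn
      have hlt : (1:ℝ) / (n + 1) < t := by
        have h1 : (1:ℝ) / t < n + 1 := by
          have : (N:ℝ) ≤ n := by exact_mod_cast hn
          linarith
        rw [div_lt_iff₀ (by positivity)] at h1 ⊢
        nlinarith
      have hempty : E n ∩ Set.Ici t = ∅ := by
        ext x
        simp only [hE, Set.mem_inter_iff, Set.mem_Ico, Set.mem_Ici, Set.mem_empty_iff_false,
          iff_false, not_and]
        rintro ⟨hx0, hx1⟩ hx2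
        linarith
      rw [hpt n, hempty]
      simp
    have h2 : Tendsto (seq (h.toLp _)) (U : Filter ℕ) (𝓝 0) := by
      refine Tendsto.congr' ?_ (tendsto_const_nhds : Tendsto (fun _ : ℕ => (0:ℝ)) (U : Filter ℕ) (𝓝 0))
      exact (Filter.Eventually.filter_mono hU hev).mono fun n hn => hn.symm
    exact tendsto_nhds_unique (htend _) h2
  -- the norm is 1
  have hmem0 : MemLp ((Set.Ici (0:ℝ)).indicator fun _ => (1:ℝ)) ⊤ μ := by
    refine memLp_top_of_bound
      (measurable_const.indicator measurableSet_Ici).aestronglyMeasurable 1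
      (Eventually.of_forall fun x => ?_)
    by_cases hx : x ∈ Set.Ici (0:ℝ) <;> simp [Set.indicator_apply, hx]
  have hρle : ‖ρ‖ ≤ 1 := LinearMap.mkContinuous_norm_le L zero_le_one hLbound
  have hnormf : ‖hmem0.toLp _‖ ≤ 1 := by
    rw [Lp.norm_toLp, eLpNorm_exponent_top]
    have h1 : eLpNormEssSup ((Set.Ici (0:ℝ)).indicator fun _ => (1:ℝ)) μ
        ≤ ENNReal.ofReal 1 :=
      eLpNormEssSup_le_of_ae_bound (Eventually.of_forall fun x => by
        by_cases hx : x ∈ Set.Ici (0:ℝ) <;> simp [Set.indicator_apply, hx])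
    calc (eLpNormEssSup ((Set.Ici (0:ℝ)).indicator fun _ => (1:ℝ)) μ).toReal
        ≤ (ENNReal.ofReal 1).toReal := ENNReal.toReal_mono ENNReal.ofReal_ne_top h1
      _ = 1 := by simp
  have hρge : 1 ≤ ‖ρ‖ := by
    have h1 := ρ.le_opNorm (hmem0.toLp _)
    rw [hρapp, hval1 hmem0] at h1
    simp only [norm_one] at h1
    have h2 : ‖ρ‖ * ‖hmem0.toLp _‖ ≤ ‖ρ‖ * 1 :=
      mul_le_mul_of_nonneg_left hnormf (norm_nonneg _)
    linarith
  refine ⟨0, ρ, le_antisymm hρle hρge, fun hf hft => ⟨?_, fun t ht => ?_⟩⟩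
  · rw [hρapp]; exact hval1 hf
  · rw [hρapp]; exact hval2 t ht (hft t)
end

section
/- Let μ be a Radon measure on ℝ such that for all bounded Borel functions f, g with bounded support, ∫ f(x − t) g(x) dμ(x) → ∫ f(x) g(x) dμ(x) as t → 0. Then μ is absolutely continuous with respect to Lebesgue measure. -/
open MeasureTheory Filter

lemma stmt10_key (μ : Measure ℝ) [IsFiniteMeasureOnCompacts μ]
    (hwb : ∀ f g : ℝ → ℝ, Measurable f → Measurable g →
      (∃ M : ℝ, ∀ x, |f x| ≤ M) → (∃ M : ℝ, ∀ x, |g x| ≤ M) →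
      Bornology.IsBounded (Function.support f) → Bornology.IsBounded (Function.support g) →
      Tendsto (fun t : ℝ => ∫ x, f (x - t) * g x ∂μ) (nhds 0)
        (nhds (∫ x, f x * g x ∂μ)))
    (A : Set ℝ) (hA : MeasurableSet A) (hb : Bornology.IsBounded A)
    (h0 : volume A = 0) : μ A = 0 := by
  by_contra hμA
  set f : ℝ → ℝ := A.indicator (fun _ => (1:ℝ)) with hf
  have hfm : Measurable f := measurable_const.indicator hA
  have hfb : ∃ M : ℝ, ∀ x, |f x| ≤ M := by
    refine ⟨1, fun x => ?_⟩
    by_cases h : x ∈ A <;> simp [hf, Set.indicator, h]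
  have hfs : Bornology.IsBounded (Function.support f) :=
    hb.subset Set.support_indicator_subset
  have htend := hwb f f hfm hfm hfb hfb hfs hfs
  -- compute the limit value
  have hff : ∀ x, f x * f x = f x := by
    intro x; by_cases h : x ∈ A <;> simp [hf, Set.indicator, h]
  have hμA_top : μ A ≠ ⊤ := by
    have : μ A ≤ μ (closure A) := measure_mono subset_closure
    exact (this.trans_lt hb.isCompact_closure.measure_lt_top).ne
  have hr : ∫ x, f x * f x ∂μ = (μ A).toReal := by
    simp only [hff, hf]
    have e : ∀ x, A.indicator (fun _ => (1:ℝ)) x * A.indicator (fun _ => (1:ℝ)) x = A.indicator 1 x := fun x => by by_cases h : x ∈ A <;> simp [Set.indicator, h]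
    simp only [e]
    exact integral_indicator_one hA
  set r : ℝ := (μ A).toReal with hrdef
  have hrpos : 0 < r := ENNReal.toReal_pos hμA hμA_top
  rw [hr] at htend
  -- ENNReal indicator
  set i : ℝ → ENNReal := A.indicator (fun _ => (1:ENNReal)) with hi
  have him : Measurable i := measurable_const.indicator hA
  have hgm : Measurable (fun p : ℝ × ℝ => i (p.2 - p.1) * i p.2) :=
    (him.comp (measurable_snd.sub measurable_fst)).mul (him.comp measurable_snd)
  have hswap : ∫⁻ t, ∫⁻ x, i (x - t) * i x ∂μ ∂volume
      = ∫⁻ x, ∫⁻ t, i (x - t) * i x ∂volume ∂μ :=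
    lintegral_lintegral_swap hgm.aemeasurable
  have hinner : ∀ x : ℝ, ∫⁻ t, i (x - t) * i x ∂volume = 0 := by
    intro x
    have h1 : ∫⁻ t, i (x - t) * i x ∂volume
        = (∫⁻ t, i (x - t) ∂volume) * i x :=
      lintegral_mul_const _ (him.comp (measurable_const.sub measurable_id))
    have h2 : ∫⁻ t, i (x - t) ∂volume = ∫⁻ y, i y ∂volume :=
      (Measure.measurePreserving_sub_left volume x).lintegral_comp him
    have h3 : ∫⁻ y, i y ∂volume = volume A := by
      rw [hi]
      exact lintegral_indicator_one (μ := volume) hA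
    rw [h1, h2, h3, h0, zero_mul]
  have hzero : ∫⁻ t, ∫⁻ x, i (x - t) * i x ∂μ ∂volume = 0 := by
    rw [hswap]
    simp [hinner]
  have hGm : Measurable (fun t => ∫⁻ x, i (x - t) * i x ∂μ) :=
    Measurable.lintegral_prod_right (f := fun t x => i (x - t) * i x) hgm
  have hae : ∀ᵐ t ∂volume, ∫⁻ x, i (x - t) * i x ∂μ = 0 :=
    (lintegral_eq_zero_iff hGm).mp hzero
  -- from zero lintegral in x, deduce the Bochner integral is zero
  have hFzero : ∀ᵐ t ∂volume, ∫ x, f (x - t) * f x ∂μ = 0 := by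
    filter_upwards [hae] with t ht
    have hxm : Measurable (fun x => i (x - t) * i x) :=
      (him.comp (measurable_id.sub measurable_const)).mul him
    have hxae : ∀ᵐ x ∂μ, i (x - t) * i x = 0 :=
      (lintegral_eq_zero_iff hxm).mp ht
    have : ∀ᵐ x ∂μ, f (x - t) * f x = 0 := by
      filter_upwards [hxae] with x hx
      by_cases h1 : x - t ∈ A
      · by_cases h2 : x ∈ A
        · exfalso; simp [hi, Set.indicator, h1, h2] at hx
        · simp [hf, Set.indicator, h2]
      · simp [hf, Set.indicator, h1]
    exact integral_eq_zero_of_ae this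
  -- contradiction with the tendsto
  have hev : ∀ᶠ t in nhds (0:ℝ), r / 2 < ∫ x, f (x - t) * f x ∂μ :=
    htend.eventually (eventually_gt_nhds (by linarith))
  rw [Metric.eventually_nhds_iff] at hev
  obtain ⟨ε, hε, hball⟩ := hev
  have hne : ∃ t, t ∈ Metric.ball (0:ℝ) ε ∧ ∫ x, f (x - t) * f x ∂μ = 0 := by
    by_contra hcon
    push_neg at hcon
    have hsub : Metric.ball (0:ℝ) ε ⊆ {t | ¬ (∫ x, f (x - t) * f x ∂μ = 0)} :=
      fun t ht => hcon t ht
    have h1 : volume {t | ¬ (∫ x, f (x - t) * f x ∂μ = 0)} = 0 := hFzero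
    have h2 : volume (Metric.ball (0:ℝ) ε) = 0 :=
      le_antisymm (h1 ▸ measure_mono hsub) (zero_le)
    exact (Metric.measure_ball_pos volume 0 hε).ne' h2
  obtain ⟨t, ht, hFt⟩ := hne
  have := hball (show dist t 0 < ε by simpa [Real.dist_eq] using ht)
  rw [hFt] at this
  linarith

/-- If translation is wb-continuous at 0 for a Radon measure μ, then μ ≪ m. -/
theorem stmt10 (μ : Measure ℝ) [IsFiniteMeasureOnCompacts μ]
    (hwb : ∀ f g : ℝ → ℝ, Measurable f → Measurable g →
      (∃ M : ℝ, ∀ x, |f x| ≤ M) → (∃ M : ℝ, ∀ x, |g x| ≤ M) →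
      Bornology.IsBounded (Function.support f) → Bornology.IsBounded (Function.support g) →
      Tendsto (fun t : ℝ => ∫ x, f (x - t) * g x ∂μ) (nhds 0)
        (nhds (∫ x, f x * g x ∂μ))) :
    μ ≪ (volume : Measure ℝ) := by
  refine Measure.AbsolutelyContinuous.mk (fun s hs h0 => ?_)
  have hcover : s ⊆ ⋃ n : ℕ, s ∩ Metric.closedBall (0:ℝ) n := by
    intro x hx
    obtain ⟨n, hn⟩ := exists_nat_ge |x|
    exact Set.mem_iUnion.mpr ⟨n, hx, by simpa [Real.dist_eq] using hn⟩
  have hle : μ s ≤ ∑' n : ℕ, μ (s ∩ Metric.closedBall (0:ℝ) n) :=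
    (measure_mono hcover).trans (measure_iUnion_le _)
  have hzero : ∀ n : ℕ, μ (s ∩ Metric.closedBall (0:ℝ) n) = 0 := by
    intro n
    refine stmt10_key μ hwb _ (hs.inter measurableSet_closedBall)
      (Metric.isBounded_closedBall.subset Set.inter_subset_right) ?_
    exact le_antisymm (h0 ▸ measure_mono Set.inter_subset_left) (zero_le)
  simp only [hzero, tsum_zero] at hle
  exact le_antisymm hle (zero_le)
end

section
/- Every nonzero quasi-translation invariant Radon measure μ on ℝ is equivalent to Lebesgue measure (i.e., μ ≪ m and m ≪ μ). -/
open MeasureTheory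

/-- Every nonzero quasi-translation invariant Radon measure on ℝ is equivalent to
Lebesgue measure. -/
theorem stmt13 (μ : Measure ℝ) [IsFiniteMeasureOnCompacts μ]
    (hqti : ∀ E : Set ℝ, MeasurableSet E → ∀ t : ℝ, (μ E = 0 ↔ μ ((· - t) ⁻¹' E) = 0))
    (hne : μ ≠ 0) :
    μ ≪ (volume : Measure ℝ) ∧ (volume : Measure ℝ) ≪ μ := by
  have key : ∀ E : Set ℝ, MeasurableSet E →
      (μ.prod volume) ((fun p : ℝ × ℝ => p.1 - p.2) ⁻¹' E)
        = ∫⁻ x, volume ((fun t => x - t) ⁻¹' E) ∂μ := by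
    intro E hE
    rw [Measure.prod_apply ((show Measurable (fun p : ℝ × ℝ => p.1 - p.2) from measurable_fst.sub measurable_snd) hE)]
    rfl
  have key2 : ∀ E : Set ℝ, MeasurableSet E →
      (μ.prod volume) ((fun p : ℝ × ℝ => p.1 - p.2) ⁻¹' E)
        = ∫⁻ t, μ ((fun x => x - t) ⁻¹' E) ∂volume := by
    intro E hE
    rw [Measure.prod_apply_symm ((show Measurable (fun p : ℝ × ℝ => p.1 - p.2) from measurable_fst.sub measurable_snd) hE)]
    rfl
  have hfib : ∀ (E : Set ℝ) (x : ℝ), volume ((fun t => x - t) ⁻¹' E) = volume E := by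
    intro E x
    have h1 : (fun t : ℝ => x - t) ⁻¹' E = Neg.neg ⁻¹' ((fun t => x + t) ⁻¹' E) := by
      ext t; simp [sub_eq_add_neg]
    rw [h1, Measure.measure_preimage_neg, measure_preimage_add]
  constructor
  · refine Measure.AbsolutelyContinuous.mk fun E hE hvE => ?_
    have h0 : (μ.prod volume) ((fun p : ℝ × ℝ => p.1 - p.2) ⁻¹' E) = 0 := by
      rw [key E hE]
      simp [hfib E, hvE]
    rw [key2 E hE] at h0
    have hmeas : Measurable fun t : ℝ => μ ((fun x => x - t) ⁻¹' E) :=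
      measurable_measure_prodMk_right ((measurable_fst.sub measurable_snd) hE)
    have hae := (lintegral_eq_zero_iff hmeas).mp h0
    obtain ⟨t, ht⟩ := hae.exists
    exact (hqti E hE t).mpr ht
  · refine Measure.AbsolutelyContinuous.mk fun E hE hμE => ?_
    have h0 : (μ.prod volume) ((fun p : ℝ × ℝ => p.1 - p.2) ⁻¹' E) = 0 := by
      rw [key2 E hE]
      have h : ∀ t : ℝ, μ ((fun x => x - t) ⁻¹' E) = 0 := fun t => (hqti E hE t).mp hμE
      simp [h]
    rw [key E hE] at h0
    simp only [hfib E, lintegral_const] at h0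
    rcases mul_eq_zero.mp h0 with h | h
    · exact h
    · exact absurd h (Measure.measure_univ_pos.mpr hne).ne'
end

section
/- For a Radon measure μ on ℝ the following are equivalent: (1) μ is quasi-translation invariant; (2) the translations (T_t)_{t∈ℝ} act as a group of well-defined linear operators on L^∞(μ); (3) the translations act as a group of isometries on L^∞(μ); (4) μ is equivalent to Lebesgue measure. (Assume μ nonzero.) -/
open MeasureTheory ENNReal

section Aux

variable (μ : Measure ℝ) [IsFiniteMeasureOnCompacts μ]

private lemma stmt15_meas (t : ℝ) : Measurable (fun x : ℝ => x - t) :=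
  measurable_id.sub_const t

/-- Key Fubini computation. -/
private lemma stmt15_key (E : Set ℝ) (hE : MeasurableSet E) :
    ∫⁻ t, μ ((· - t) ⁻¹' E) = volume E * μ Set.univ := by
  have hmE : ∀ t : ℝ, MeasurableSet ((· - t) ⁻¹' E) := fun t => (stmt15_meas t) hE
  have h1 : ∀ t : ℝ, μ ((· - t) ⁻¹' E) = ∫⁻ x, E.indicator (1 : ℝ → ℝ≥0∞) (x - t) ∂μ := by
    intro t
    have : (fun x : ℝ => E.indicator (1 : ℝ → ℝ≥0∞) (x - t))
        = ((· - t) ⁻¹' E).indicator 1 := by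
      ext x
      by_cases hx : x - t ∈ E <;> simp [Set.indicator, hx]
    rw [this, lintegral_indicator_one (hmE t)]
  simp_rw [h1]
  have hmeas : AEMeasurable (Function.uncurry fun (t x : ℝ) => E.indicator (1 : ℝ → ℝ≥0∞) (x - t))
      ((volume : Measure ℝ).prod μ) := by
    have : Measurable fun p : ℝ × ℝ => E.indicator (1 : ℝ → ℝ≥0∞) (p.2 - p.1) :=
      (measurable_one.indicator hE).comp (measurable_snd.sub measurable_fst)
    exact this.aemeasurable
  rw [lintegral_lintegral_swap hmeas]
  have h2 : ∀ x : ℝ, ∫⁻ t, E.indicator (1 : ℝ → ℝ≥0∞) (x - t) = volume E := by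
    intro x
    have hp : MeasurePreserving (fun t : ℝ => x - t) volume volume :=
      Measure.measurePreserving_sub_left volume x
    have : (fun t : ℝ => E.indicator (1 : ℝ → ℝ≥0∞) (x - t))
        = ((fun t : ℝ => x - t) ⁻¹' E).indicator 1 := by
      ext t
      by_cases ht : x - t ∈ E <;> simp [Set.indicator, ht]
    rw [this, lintegral_indicator_one (hp.measurable hE),
      hp.measure_preimage hE.nullMeasurableSet]
  simp_rw [h2]
  rw [lintegral_const, mul_comm]

end Aux

/-- For a nonzero Radon measure μ on ℝ, TFAE: (1) μ is q.t.i.; (2) translations act as a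
group of well-defined linear operators on L^∞(μ); (3) translations act as a group of
isometries on L^∞(μ); (4) μ is equivalent to Lebesgue measure. -/
theorem stmt15 (μ : Measure ℝ) [IsFiniteMeasureOnCompacts μ] (hne : μ ≠ 0) :
    [ (∀ E : Set ℝ, MeasurableSet E → ∀ t : ℝ, (μ E = 0 ↔ μ ((· - t) ⁻¹' E) = 0)),
      (∀ t : ℝ,
        (∀ f g : ℝ → ℝ, f =ᵐ[μ] g → (fun x => f (x - t)) =ᵐ[μ] fun x => g (x - t)) ∧
        ∀ f : ℝ → ℝ, MemLp f ⊤ μ → MemLp (fun x => f (x - t)) ⊤ μ),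
      (∀ t : ℝ,
        (∀ f g : ℝ → ℝ, f =ᵐ[μ] g → (fun x => f (x - t)) =ᵐ[μ] fun x => g (x - t)) ∧
        ∀ f : ℝ → ℝ, MemLp f ⊤ μ →
          eLpNorm (fun x => f (x - t)) ⊤ μ = eLpNorm f ⊤ μ),
      (μ ≪ (volume : Measure ℝ) ∧ (volume : Measure ℝ) ≪ μ) ].TFAE := by
  -- quasi-invariance for arbitrary sets and a.e.-equality preservation, from (1)
  have null_prop : (∀ E : Set ℝ, MeasurableSet E → ∀ t : ℝ,
      (μ E = 0 ↔ μ ((· - t) ⁻¹' E) = 0)) →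
      ∀ (S : Set ℝ) (t : ℝ), μ S = 0 → μ ((· - t) ⁻¹' S) = 0 := by
    intro h1 S t hS
    have hN : μ (toMeasurable μ S) = 0 := by rwa [measure_toMeasurable]
    have := (h1 _ (measurableSet_toMeasurable μ S) t).mp hN
    exact measure_mono_null (Set.preimage_mono (subset_toMeasurable μ S)) this
  have ae_prop : (∀ E : Set ℝ, MeasurableSet E → ∀ t : ℝ,
      (μ E = 0 ↔ μ ((· - t) ⁻¹' E) = 0)) →
      ∀ (t : ℝ) (f g : ℝ → ℝ), f =ᵐ[μ] g →
        (fun x => f (x - t)) =ᵐ[μ] fun x => g (x - t) := by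
    intro h1 t f g hfg
    have hD : μ {x | f x ≠ g x} = 0 := by
      rw [Filter.EventuallyEq, ae_iff] at hfg; exact hfg
    have := null_prop h1 {x | f x ≠ g x} t hD
    rw [Filter.EventuallyEq, ae_iff]
    exact measure_mono_null (fun x hx => hx) this
  tfae_have 1 → 3 := by
    intro h1 t
    refine ⟨ae_prop h1 t, fun f hf => ?_⟩
    -- mutual absolute continuity of `map (· - t) μ` and `μ`
    have hmap : Measure.map (· - t) μ ≪ μ := by
      refine Measure.AbsolutelyContinuous.mk fun s hs h0 => ?_
      rw [Measure.map_apply (stmt15_meas t) hs]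
      exact (h1 s hs t).mp h0
    have hmap' : μ ≪ Measure.map (· - t) μ := by
      refine Measure.AbsolutelyContinuous.mk fun s hs h0 => ?_
      rw [Measure.map_apply (stmt15_meas t) hs] at h0
      exact (h1 s hs t).mpr h0
    have hg : AEStronglyMeasurable f (Measure.map (· - t) μ) := hf.1.mono_ac hmap
    have heq : eLpNorm (fun x => f (x - t)) ⊤ μ = eLpNorm f ⊤ (Measure.map (· - t) μ) :=
      (eLpNorm_map_measure hg (stmt15_meas t).aemeasurable).symm
    rw [heq, eLpNorm_exponent_top, eLpNorm_exponent_top]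
    exact le_antisymm (eLpNormEssSup_mono_measure f hmap) (eLpNormEssSup_mono_measure f hmap')
  tfae_have 3 → 2 := by
    intro h3 t
    refine ⟨(h3 t).1, fun f hf => ?_⟩
    obtain ⟨g, hgmeas, hfg⟩ := hf.1
    refine ⟨⟨fun x => g (x - t), hgmeas.comp_measurable (stmt15_meas t),
      (h3 t).1 f g hfg⟩, ?_⟩
    rw [(h3 t).2 f hf]
    exact hf.2
  tfae_have 2 → 1 := by
    intro h2
    -- one-sided null propagation from (2)
    have prop : ∀ (S : Set ℝ) (t : ℝ), μ S = 0 → μ ((· - t) ⁻¹' S) = 0 := by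
      intro S t hS
      have hf : (S.indicator (fun _ => (1 : ℝ))) =ᵐ[μ] 0 := by
        rw [Filter.EventuallyEq, ae_iff]
        refine measure_mono_null (fun x hx => ?_) hS
        simp only [Set.mem_setOf_eq, Pi.zero_apply] at hx
        by_contra hxS
        exact hx (Set.indicator_of_notMem hxS _)
      have := (h2 t).1 _ 0 hf
      rw [Filter.EventuallyEq, ae_iff] at this
      refine measure_mono_null (fun x hx => ?_) this
      simp only [Set.mem_setOf_eq, Pi.zero_apply]
      rw [Set.indicator_of_mem (show x - t ∈ S from hx)]
      exact one_ne_zero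
    intro E _ t
    constructor
    · exact prop E t
    · intro h
      have := prop ((· - t) ⁻¹' E) (-t) h
      have heq : ((· - (-t)) ⁻¹' ((· - t) ⁻¹' E)) = E := by
        ext x; simp [sub_neg_eq_add]
      rwa [heq] at this
  tfae_have 1 → 4 := by
    intro h1
    constructor
    · refine Measure.AbsolutelyContinuous.mk fun s hs h0 => ?_
      have hkey : ∫⁻ t, μ ((· - t) ⁻¹' s) = 0 := by
        rw [stmt15_key μ s hs, h0, zero_mul]
      have hm : Measurable fun t : ℝ => μ ((· - t) ⁻¹' s) := by
        have hps : MeasurableSet {p : ℝ × ℝ | p.2 - p.1 ∈ s} :=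
          (measurable_snd.sub measurable_fst) hs
        have := measurable_measure_prodMk_left (ν := μ) hps
        convert this using 2 with t
        rfl
      have hae : ∀ᵐ t : ℝ, μ ((· - t) ⁻¹' s) = 0 :=
        (lintegral_eq_zero_iff hm).mp hkey
      obtain ⟨t, ht⟩ := hae.exists
      exact (h1 s hs t).mpr ht
    · refine Measure.AbsolutelyContinuous.mk fun s hs h0 => ?_
      have hall : ∀ t : ℝ, μ ((· - t) ⁻¹' s) = 0 := fun t => (h1 s hs t).mp h0
      have hkey : volume s * μ Set.univ = 0 := by
        rw [← stmt15_key μ s hs]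
        simp [hall]
      rcases (mul_eq_zero).mp hkey with h | h
      · exact h
      · exact absurd h (Measure.measure_univ_ne_zero.mpr hne)
  tfae_have 4 → 1 := by
    rintro ⟨hμm, hmμ⟩ E hE t
    have equiv : ∀ S : Set ℝ, μ S = 0 ↔ volume S = 0 :=
      fun S => ⟨fun h => hmμ h, fun h => hμm h⟩
    have hp : MeasurePreserving (fun x : ℝ => x - t) volume volume :=
      measurePreserving_sub_right volume t
    rw [equiv, equiv, hp.measure_preimage hE.nullMeasurableSet]
  tfae_finish
end
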